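/- arXiv:math/0108013 — 3 statements merged into one kernel-verified Lean document; each statement's English description precedes it below -/
import Mathlib

section
/- Let P ⊆ ℝ^n be a full-dimensional lattice polytope whose lattice points affinely generate ℤ^n. A nonzero vector v ∈ ℤ^n is a column vector of P if and only if there exists a facet F of P with ⟨F,v⟩ = −1 and ⟨G,v⟩ ≥ 0 for every facet G ≠ F. Moreover, such a facet F is unique and equals the base facet P_v of v. -/
open Set

noncomputable section

/-- The real point corresponding to a lattice point of `ℤⁿ`. -/
def toR {n : ℕ} (z : Fin n → ℤ) : Fin n → ℝ := fun i => (z i : ℝ)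

/-- A lattice polytope, described as the convex hull of a nonempty finite set of
lattice points. -/
structure LatticePolytope (n : ℕ) where
  verts : Finset (Fin n → ℤ)
  nonem : verts.Nonempty

namespace LatticePolytope

variable {n : ℕ}

/-- The underlying set of the polytope. -/
def carrier (P : LatticePolytope n) : Set (Fin n → ℝ) :=
  convexHull ℝ (↑(P.verts.image toR))

/-- `P` is full-dimensional. -/
def IsFullDim (P : LatticePolytope n) : Prop :=
  (interior P.carrier).Nonempty

/-- The set `L_P` of lattice points of `P`. -/
def latticePoints (P : LatticePolytope n) : Set (Fin n → ℤ) :=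
  {z | toR z ∈ P.carrier}

/-- The lattice points of `P` affinely generate `ℤⁿ`. -/
def AffGen (P : LatticePolytope n) : Prop :=
  ∀ x₀ ∈ P.latticePoints,
    AddSubgroup.closure {y | ∃ x ∈ P.latticePoints, y = x - x₀} =
      (⊤ : AddSubgroup (Fin n → ℤ))

/-- The `ℝ`-linear extension of an additive form on `ℤⁿ`. -/
def formR (φ : (Fin n → ℤ) →+ ℤ) : (Fin n → ℝ) → ℝ :=
  fun x => ∑ i, x i * (φ (Pi.single i 1) : ℝ)

/-- A facet of `P`, encoded together with its support form `⟨F,-⟩` (a surjective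
additive form whose minimum `b_F` over `P` is attained exactly on the facet, the
facet being `(n-1)`-dimensional). -/
structure Facet (P : LatticePolytope n) where
  form : (Fin n → ℤ) →+ ℤ
  surj : Function.Surjective form
  b : ℤ
  min_le : ∀ x ∈ P.carrier, (b : ℝ) ≤ formR form x
  attained : ∃ x ∈ P.carrier, formR form x = (b : ℝ)
  dim : Module.finrank ℝ (vectorSpan ℝ {x ∈ P.carrier | formR form x = (b : ℝ)}) + 1 = n

/-- The underlying set of a facet. -/
def Facet.set {P : LatticePolytope n} (F : P.Facet) : Set (Fin n → ℝ) :=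
  {x ∈ P.carrier | formR F.form x = (F.b : ℝ)}

/-- `F` is a base facet for `v`, i.e. `v` is a column vector with base facet `F`. -/
def IsBaseFacet (P : LatticePolytope n) (v : Fin n → ℤ) (F : P.Facet) : Prop :=
  v ≠ 0 ∧ ∀ x : Fin n → ℤ, toR x ∈ P.carrier → toR x ∉ F.set →
    toR (x + v) ∈ P.carrier

/-- `v` is a column vector of `P`. -/
def IsColVec (P : LatticePolytope n) (v : Fin n → ℤ) : Prop :=
  ∃ F : P.Facet, P.IsBaseFacet v F

/-- `Col(P)`, the set of column vectors of `P`. -/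
def Col (P : LatticePolytope n) : Set (Fin n → ℤ) := {v | P.IsColVec v}

/-- The product `uv` of the column vectors `u` and `v` exists. -/
def ProdEx (P : LatticePolytope n) (u v : Fin n → ℤ) : Prop :=
  P.IsColVec u ∧ P.IsColVec v ∧ u + v ≠ 0 ∧
    ∀ Fu Fv : P.Facet, P.IsBaseFacet u Fu → P.IsBaseFacet v Fv →
      ∀ x : Fin n → ℤ, toR x ∈ P.carrier → toR x ∉ Fu.set → toR (x + u) ∉ Fv.set

/-- `P` is balanced: `⟨P_u, v⟩ ≤ 1` for all column vectors `u, v`. -/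
def Balanced (P : LatticePolytope n) : Prop :=
  ∀ u v : Fin n → ℤ, ∀ F : P.Facet, P.IsBaseFacet u F → P.IsColVec v → F.form v ≤ 1

/-- Weak existence of the product of a (nonempty) list of column vectors:
some bracketing makes all the recursively formed pairwise products exist. -/
inductive WeakProd (P : LatticePolytope n) : List (Fin n → ℤ) → Prop
  | single (v : Fin n → ℤ) (h : P.IsColVec v) : WeakProd P [v]
  | mul (L₁ L₂ : List (Fin n → ℤ)) (h₁ : WeakProd P L₁) (h₂ : WeakProd P L₂)
      (h : P.ProdEx L₁.sum L₂.sum) : WeakProd P (L₁ ++ L₂)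

/-- Strong existence of the product of a list of column vectors: all consecutive
products exist and all sums over intervals of length at least two are nonzero. -/
def StrongProd (P : LatticePolytope n) (L : List (Fin n → ℤ)) : Prop :=
  L ≠ [] ∧ (∀ x ∈ L, P.IsColVec x) ∧
  (∀ i : ℕ, ∀ h : i + 1 < L.length,
      P.ProdEx (L.get ⟨i, Nat.lt_of_succ_lt h⟩) (L.get ⟨i + 1, h⟩)) ∧
  (∀ r s : ℕ, r < s → s < L.length → ((L.drop r).take (s + 1 - r)).sum ≠ 0)

/-- `[V]` : the set of strongly existing products of elements of `V`. -/
def bra (P : LatticePolytope n) (V : Set (Fin n → ℤ)) : Set (Fin n → ℤ) :=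
  {w | ∃ L : List (Fin n → ℤ), (∀ x ∈ L, x ∈ V) ∧ P.StrongProd L ∧ L.sum = w}

/-- `⟨V⟩` : the set of weakly existing products of elements of `V`. -/
def ket (P : LatticePolytope n) (V : Set (Fin n → ℤ)) : Set (Fin n → ℤ) :=
  {w | ∃ L : List (Fin n → ℤ), (∀ x ∈ L, x ∈ V) ∧ P.WeakProd L ∧ L.sum = w}

end LatticePolytope

/-- An admissible finite directed graph (on vertex set `Fin k`): no isolated
vertices, no loops, and an edge `a → b` is the unique directed path from `a` to
`b`. -/
structure GoodGraph (k : ℕ) (E : Fin k → Fin k → Prop) : Prop where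
  no_isolated : ∀ a, (∃ b, E a b) ∨ (∃ b, E b a)
  no_loop : ∀ a, ¬ E a a
  unique_path : ∀ a b, E a b →
    ¬ ∃ c, Relation.TransGen E a c ∧ Relation.TransGen E c b

/-- A `Y`-graph: every vertex is the endpoint of at most one edge. -/
def IsYGraph (k : ℕ) (E : Fin k → Fin k → Prop) : Prop :=
  ∀ a b c, E b a → E c a → b = c

namespace LatticePolytope

variable {n : ℕ}

/-- The graph `E` supports the system `V`: `E` is admissible, and equivalence
classes of paths (i.e. reachable pairs of vertices) are in bijection with `[V]`
compatibly with the partial product structures. -/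
def Supports (P : LatticePolytope n) (V : Set (Fin n → ℤ)) (k : ℕ)
    (E : Fin k → Fin k → Prop) : Prop :=
  GoodGraph k E ∧
  ∃ f : {w // w ∈ P.bra V} → {p : Fin k × Fin k // Relation.TransGen E p.1 p.2},
    Function.Bijective f ∧
    ∀ u v : {w // w ∈ P.bra V},
      (P.ProdEx u.1 v.1 ↔ (f u).1.2 = (f v).1.1) ∧
      ∀ h : u.1 + v.1 ∈ P.bra V, P.ProdEx u.1 v.1 →
        (f ⟨u.1 + v.1, h⟩).1 = ((f u).1.1, (f v).1.2)

/-- `V` is a rigid system of column vectors of `P`. -/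
def IsRigid (P : LatticePolytope n) (V : Set (Fin n → ℤ)) : Prop :=
  V ⊆ P.Col ∧
  (∀ w, w ∈ P.bra V → -w ∉ P.bra V) ∧
  P.bra V = P.ket V ∧
  ∃ (k : ℕ) (E : Fin k → Fin k → Prop), P.Supports V k E

/-- `V` is a `Y`-rigid system of column vectors of `P`. -/
def IsYRigid (P : LatticePolytope n) (V : Set (Fin n → ℤ)) : Prop :=
  V ⊆ P.Col ∧
  (∀ w, w ∈ P.bra V → -w ∉ P.bra V) ∧
  P.bra V = P.ket V ∧
  ∃ (k : ℕ) (E : Fin k → Fin k → Prop), IsYGraph k E ∧ P.Supports V k E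

/-- `w` is an irreducible element of `[V]`. -/
def Irred (P : LatticePolytope n) (V : Set (Fin n → ℤ)) (w : Fin n → ℤ) : Prop :=
  w ∈ P.bra V ∧
  ¬ ∃ u v : Fin n → ℤ, u ∈ P.ket V ∧ v ∈ P.ket V ∧ P.ProdEx u v ∧ u + v = w

/-- The submonoid `S_P ⊆ ℤ^{n+1}` generated by `{(x,1) : x ∈ L_P}`. -/
def SP (P : LatticePolytope n) : AddSubmonoid ((Fin n → ℤ) × ℤ) :=
  AddSubmonoid.closure {p | ∃ x ∈ P.latticePoints, p = (x, (1 : ℤ))}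

/-- The height of `z ∈ ℤ^{n+1}` over the facet `F`. -/
def htF {P : LatticePolytope n} (F : P.Facet) (z : (Fin n → ℤ) × ℤ) : ℤ :=
  F.form z.1 - z.2 * F.b

end LatticePolytope

/-- `P` is `Col`-divisible: conditions (CD1) and (CD2) on products of column
vectors. -/
def LatticePolytope.ColDivisible {n : ℕ} (P : LatticePolytope n) : Prop :=
  (∀ a b c : Fin n → ℤ, a ≠ b → P.ProdEx a c → P.ProdEx b c →
      ∃ d, (P.ProdEx d b ∧ d + b = a) ∨ (P.ProdEx d a ∧ d + a = b)) ∧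
  (∀ a b c d : Fin n → ℤ, P.ProdEx a b → P.ProdEx c d → a + b = c + d → a ≠ c →
      ∃ t, (P.ProdEx c t ∧ c + t = a ∧ P.ProdEx t b ∧ t + b = d) ∨
           (P.ProdEx a t ∧ a + t = c ∧ P.ProdEx t d ∧ t + d = b))

/-- A facet is a base facet if it is the base facet of some column vector. -/
def LatticePolytope.IsBase {n : ℕ} (P : LatticePolytope n) (F : P.Facet) : Prop :=
  ∃ z, P.IsBaseFacet z F

/-- A column vector is terminal if it has positive height over no base facet. -/
def LatticePolytope.TerminalVec {n : ℕ} (P : LatticePolytope n) (v : Fin n → ℤ) : Prop :=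
  P.IsColVec v ∧ ¬ ∃ F : P.Facet, P.IsBase F ∧ 0 < F.form v

/-- The unit `N`-simplex `conv(0, e_1, …, e_N) ⊆ ℝ^N` as a lattice polytope. -/
def unitSimplex (N : ℕ) : LatticePolytope N where
  verts := insert 0 (Finset.univ.image fun i : Fin N => Pi.single i (1 : ℤ))
  nonem := ⟨0, Finset.mem_insert_self _ _⟩

/-- Doubling of `P` along the facet with support form `φ` (with `b = 0`), where
`u` is a fixed lattice vector with `φ u = 1`: the convex hull of `P × {0}` and
`ρ(P)`, `ρ(x) = (x - φ(x)·u, φ(x))`. -/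
def LatticePolytope.dbl {n : ℕ} (P : LatticePolytope n) (φ : (Fin n → ℤ) →+ ℤ)
    (u : Fin n → ℤ) : LatticePolytope (n + 1) where
  verts := (P.verts.image fun x => Fin.snoc x (0 : ℤ)) ∪
           (P.verts.image fun x => Fin.snoc (x - φ x • u) (φ x))
  nonem := (P.nonem.image _).mono Finset.subset_union_left

/-- The polytopal algebra `R[P] = R[S_P]`, realized as the subalgebra of
`R[ℤ^{n+1}]` generated by the monomials `(x,1)`, `x ∈ L_P`. -/
def polyAlg (R : Type) [CommRing R] {n : ℕ} (P : LatticePolytope n) :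
    Subalgebra R (AddMonoidAlgebra R ((Fin n → ℤ) × ℤ)) :=
  Algebra.adjoin R
    {a | ∃ x ∈ P.latticePoints, a = AddMonoidAlgebra.single (x, (1 : ℤ)) (1 : R)}

/-- The multiplicative map `z ↦ z·(1 + λv)^{ht_v z}` on `ℤ^{n+1}`. -/
def phiMap (R : Type) [CommRing R] {n : ℕ} {P : LatticePolytope n}
    (v : Fin n → ℤ) (F : P.Facet) (lam : R) (z : (Fin n → ℤ) × ℤ) :
    AddMonoidAlgebra R ((Fin n → ℤ) × ℤ) :=
  AddMonoidAlgebra.single z 1 *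
    (1 + AddMonoidAlgebra.single ((v, (0 : ℤ))) lam) ^ (LatticePolytope.htF F z).toNat

/-- An element of `R[ℤ^{n+1}]` is homogeneous of degree `d`. -/
def Homog (R : Type) [CommRing R] {n : ℕ}
    (a : AddMonoidAlgebra R ((Fin n → ℤ) × ℤ)) (d : ℕ) : Prop :=
  ∀ s ∈ a.coeff.support, s.2 = (d : ℤ)

/-- `e` is the elementary automorphism `e_v^λ` of `R[P]`: on monomials from `S_P`
it is given by `z ↦ z·(1 + λv)^{ht_v z}`. -/
def ElemAutProp (R : Type) [CommRing R] {n : ℕ} {P : LatticePolytope n}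
    (v : Fin n → ℤ) (F : P.Facet) (lam : R)
    (e : polyAlg R P →ₐ[R] polyAlg R P) : Prop :=
  ∀ z ∈ P.SP, ∀ hz : AddMonoidAlgebra.single z (1 : R) ∈ polyAlg R P,
    ((e ⟨AddMonoidAlgebra.single z 1, hz⟩ : polyAlg R P) :
        AddMonoidAlgebra R ((Fin n → ℤ) × ℤ)) = phiMap R v F lam z

/-- `e` is a graded endomorphism of `R[P]`. -/
def IsGradedEndo (R : Type) [CommRing R] {n : ℕ} {P : LatticePolytope n}
    (e : polyAlg R P →ₐ[R] polyAlg R P) : Prop :=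
  ∀ (a : polyAlg R P) (d : ℕ), Homog R (a : AddMonoidAlgebra R ((Fin n → ℤ) × ℤ)) d →
    Homog R ((e a : polyAlg R P) : AddMonoidAlgebra R ((Fin n → ℤ) × ℤ)) d


namespace CVaux

open LatticePolytope

variable {n : ℕ}

/-- real dot product -/
def dotR (a x : Fin n → ℝ) : ℝ := ∑ i, a i * x i

lemma dotR_add (a x y : Fin n → ℝ) : dotR a (x + y) = dotR a x + dotR a y := by
  simp [dotR, mul_add, Finset.sum_add_distrib]

lemma dotR_smul (a : Fin n → ℝ) (c : ℝ) (x : Fin n → ℝ) :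
    dotR a (c • x) = c * dotR a x := by
  simp only [dotR, Pi.smul_apply, smul_eq_mul, Finset.mul_sum]
  exact Finset.sum_congr rfl fun i _ => by ring

/-- dot as a linear map in the second variable -/
def dotL (a : Fin n → ℝ) : (Fin n → ℝ) →ₗ[ℝ] ℝ where
  toFun := dotR a
  map_add' := dotR_add a
  map_smul' c x := dotR_smul a c x

lemma isLinearMap_dotR (a : Fin n → ℝ) : IsLinearMap ℝ (dotR a) :=
  ⟨dotR_add a, fun c x => dotR_smul a c x⟩

lemma continuous_dotR (a : Fin n → ℝ) : Continuous (dotR a) := by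
  unfold dotR
  exact continuous_finset_sum _ fun i _ =>
    (continuous_const.mul (continuous_apply i))

/-- the coefficient vector of an integral form -/
def coeffs (φ : (Fin n → ℤ) →+ ℤ) : Fin n → ℝ := fun i => (φ (Pi.single i 1) : ℝ)

lemma formR_eq_dotR (φ : (Fin n → ℤ) →+ ℤ) (x : Fin n → ℝ) :
    formR φ x = dotR (coeffs φ) x := by
  simp [formR, dotR, coeffs, mul_comm]

lemma int_apply (φ : (Fin n → ℤ) →+ ℤ) (z : Fin n → ℤ) :
    φ z = ∑ i, z i * φ (Pi.single i 1) := by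
  have hz : z = ∑ i, Pi.single i (z i) := by
    symm; exact Finset.univ_sum_single z
  calc φ z = φ (∑ i, Pi.single i (z i)) := by rw [← hz]
    _ = ∑ i, φ (Pi.single i (z i)) := map_sum φ _ _
    _ = ∑ i, z i * φ (Pi.single i 1) := by
        refine Finset.sum_congr rfl fun i _ => ?_
        have : Pi.single i (z i) = z i • (Pi.single i (1 : ℤ) : Fin n → ℤ) := by
          funext j
          by_cases h : j = i
          · subst h; simp
          · simp [Pi.single_apply, h]
        rw [this, map_zsmul, smul_eq_mul]

lemma formR_toR (φ : (Fin n → ℤ) →+ ℤ) (z : Fin n → ℤ) :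
    formR φ (toR z) = (φ z : ℝ) := by
  rw [int_apply φ z]
  push_cast
  simp [formR, toR]

lemma toR_add (x y : Fin n → ℤ) : toR (x + y) = toR x + toR y := by
  funext i; simp [toR]

/-- integral dot form as an `AddMonoidHom` -/
def intDotHom (a : Fin n → ℤ) : (Fin n → ℤ) →+ ℤ where
  toFun z := ∑ i, a i * z i
  map_zero' := by simp
  map_add' x y := by simp [mul_add, Finset.sum_add_distrib]

lemma coeffs_intDotHom (a : Fin n → ℤ) : coeffs (intDotHom a) = toR a := by
  funext i
  simp [coeffs, intDotHom, toR, Pi.single_apply, Finset.sum_ite_eq', mul_comm]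


/-! ### carrier basics -/

lemma carrier_convex (P : LatticePolytope n) : Convex ℝ P.carrier :=
  convex_convexHull ℝ _

lemma carrier_compact (P : LatticePolytope n) : IsCompact P.carrier :=
  (P.verts.image toR).finite_toSet.isCompact_convexHull ℝ

lemma carrier_closed (P : LatticePolytope n) : IsClosed P.carrier :=
  (P.verts.image toR).finite_toSet.isClosed_convexHull ℝ

lemma vert_mem_carrier (P : LatticePolytope n) {w : Fin n → ℤ} (hw : w ∈ P.verts) :
    toR w ∈ P.carrier :=
  subset_convexHull ℝ _ (by
    simp only [Finset.coe_image, Set.mem_image, Finset.mem_coe]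
    exact ⟨w, hw, rfl⟩)

lemma vert_mem_latticePoints (P : LatticePolytope n) {w : Fin n → ℤ} (hw : w ∈ P.verts) :
    w ∈ P.latticePoints := vert_mem_carrier P hw

lemma le_on_carrier {P : LatticePolytope n} {a : Fin n → ℝ} {b : ℝ}
    (h : ∀ w ∈ P.verts, b ≤ dotR a (toR w)) : ∀ x ∈ P.carrier, b ≤ dotR a x := by
  intro x hx
  have : P.carrier ⊆ {y | b ≤ dotR a y} := by
    apply convexHull_min _ (convex_halfSpace_ge (isLinearMap_dotR a) b)
    intro y hy
    simp only [Finset.coe_image, Set.mem_image, Finset.mem_coe] at hy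
    obtain ⟨w, hw, rfl⟩ := hy
    exact h w hw
  exact this hx

lemma carrier_coord_bound (P : LatticePolytope n) :
    ∃ R : ℝ, ∀ x ∈ P.carrier, ∀ i, |x i| ≤ R := by
  obtain ⟨r, hr⟩ := (carrier_compact P).isBounded.subset_closedBall 0
  refine ⟨r, fun x hx i => ?_⟩
  have := hr hx
  simp only [Metric.mem_closedBall, dist_zero_right] at this
  calc |x i| = ‖x i‖ := rfl
    _ ≤ ‖x‖ := norm_le_pi_norm x i
    _ ≤ r := this

/-- a linear functional attains its minimum over the polytope on vertices; and any
point of the carrier where the vertex-minimum is attained lies in the hull of the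
minimizing vertices. -/
lemma argmin_subset {P : LatticePolytope n} {a : Fin n → ℝ} {b : ℝ}
    (hmin : ∀ w ∈ P.verts.image toR, b ≤ dotR a w)
    {x : Fin n → ℝ} (hx : x ∈ P.carrier) (hxb : dotR a x = b) :
    x ∈ convexHull ℝ ↑((P.verts.image toR).filter (fun y => dotR a y = b)) := by
  classical
  set S := P.verts.image toR with hS
  rw [LatticePolytope.carrier, ← hS, Finset.convexHull_eq] at hx
  obtain ⟨w, hw0, hw1, hwx⟩ := hx
  have hcm : S.centerMass w id = ∑ y ∈ S, w y • y := by
    rw [Finset.centerMass_eq_of_sum_1 _ _ hw1]; rfl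
  have hxsum : x = ∑ y ∈ S, w y • y := by rw [← hwx, hcm]
  have hdot : dotR a x = ∑ y ∈ S, w y * dotR a y := by
    rw [hxsum]
    show dotL a (∑ y ∈ S, w y • y) = _
    rw [map_sum]
    exact Finset.sum_congr rfl fun y _ => by
      show dotL a (w y • y) = _; rw [map_smul]; rfl
  have hzero : ∑ y ∈ S, w y * (dotR a y - b) = 0 := by
    have expand : ∑ y ∈ S, w y * (dotR a y - b)
        = (∑ y ∈ S, w y * dotR a y) - (∑ y ∈ S, w y) * b := by
      rw [Finset.sum_mul, ← Finset.sum_sub_distrib]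
      exact Finset.sum_congr rfl fun y _ => by ring
    rw [expand, hw1, one_mul, ← hdot, hxb, sub_self]
  have hkey : ∀ y ∈ S, dotR a y ≠ b → w y = 0 := by
    intro y hy hne
    have hterm : ∀ z ∈ S, 0 ≤ w z * (dotR a z - b) := fun z hz =>
      mul_nonneg (hw0 z hz) (sub_nonneg.2 (hmin z hz))
    have := (Finset.sum_eq_zero_iff_of_nonneg hterm).1 hzero y hy
    rcases mul_eq_zero.1 this with h | h
    · exact h
    · exact absurd (sub_eq_zero.1 h) hne
  set T := S.filter (fun y => dotR a y = b) with hT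
  have hsub : T ⊆ S := Finset.filter_subset _ _
  have hsumT : ∑ y ∈ T, w y = 1 := by
    rw [← hw1]
    apply Finset.sum_subset hsub
    intro y hy hyT
    exact hkey y hy (by simpa [hT, Finset.mem_filter, hy] using hyT)
  have hxT : x = ∑ y ∈ T, w y • y := by
    rw [hxsum]
    refine (Finset.sum_subset hsub ?_).symm
    intro y hy hyT
    rw [hkey y hy (by simpa [hT, Finset.mem_filter, hy] using hyT), zero_smul]
  rw [Finset.convexHull_eq]
  refine ⟨w, fun y hy => hw0 y (hsub hy), hsumT, ?_⟩
  rw [Finset.centerMass_eq_of_sum_1 _ _ hsumT]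
  simp only [id]
  exact hxT.symm


/-! ### facet basics -/

lemma facet_min_le_lattice {P : LatticePolytope n} (F : P.Facet) {x : Fin n → ℤ}
    (hx : x ∈ P.latticePoints) : F.b ≤ F.form x := by
  have := F.min_le (toR x) hx
  rw [formR_toR] at this
  exact_mod_cast this

lemma mem_fset_iff {P : LatticePolytope n} (F : P.Facet) {x : Fin n → ℤ}
    (hx : x ∈ P.latticePoints) : toR x ∈ F.set ↔ F.form x = F.b := by
  constructor
  · rintro ⟨-, h⟩
    rw [formR_toR] at h
    exact_mod_cast h
  · intro h
    refine ⟨hx, ?_⟩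
    rw [formR_toR, h]

lemma off_fset {P : LatticePolytope n} (F : P.Facet) {x : Fin n → ℤ}
    (hx : x ∈ P.latticePoints) (hoff : toR x ∉ F.set) : F.b + 1 ≤ F.form x := by
  have h1 := facet_min_le_lattice F hx
  have h2 : F.form x ≠ F.b := fun h => hoff ((mem_fset_iff F hx).2 h)
  omega

lemma exists_vert_min {P : LatticePolytope n} (F : P.Facet) :
    ∃ w ∈ P.verts, F.form w = F.b := by
  by_contra hcon
  push_neg at hcon
  have hstep : ∀ w ∈ P.verts, (↑(F.b + 1) : ℝ) ≤ dotR (coeffs F.form) (toR w) := by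
    intro w hw
    rw [← formR_eq_dotR, formR_toR]
    have h1 := facet_min_le_lattice F (vert_mem_latticePoints P hw)
    have h2 := hcon w hw
    have : F.b + 1 ≤ F.form w := by omega
    exact_mod_cast this
  obtain ⟨x, hx, hxb⟩ := F.attained
  have := le_on_carrier hstep x hx
  rw [← formR_eq_dotR, hxb] at this
  push_cast at this
  linarith

/-- via affine generation: if `c` divides all lattice heights over `F`, then `c` divides `1`. -/
lemma dvd_one_of_dvd_heights {P : LatticePolytope n} (hgen : P.AffGen) (F : P.Facet)
    {x₀ : Fin n → ℤ} (hx₀ : x₀ ∈ P.latticePoints) (hx₀b : F.form x₀ = F.b)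
    {c : ℤ} (hc : ∀ x ∈ P.latticePoints, c ∣ (F.form x - F.b)) : c ∣ 1 := by
  have htop := hgen x₀ hx₀
  have hall : ∀ z : Fin n → ℤ, c ∣ F.form z := by
    intro z
    have hz : z ∈ AddSubgroup.closure {y | ∃ x ∈ P.latticePoints, y = x - x₀} := by
      rw [htop]; trivial
    induction hz using AddSubgroup.closure_induction with
    | mem y hy =>
        obtain ⟨x, hx, rfl⟩ := hy
        rw [map_sub, hx₀b]
        exact hc x hx
    | zero => simpa using dvd_zero c
    | add a b _ _ ha hb => rw [map_add]; exact dvd_add ha hb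
    | neg a _ ha => rw [map_neg]; exact ha.neg_right
  obtain ⟨z₁, hz₁⟩ := F.surj 1
  rw [← hz₁]
  exact hall z₁

lemma exists_lattice_off {P : LatticePolytope n} (hgen : P.AffGen) (F : P.Facet) :
    ∃ x ∈ P.latticePoints, F.b + 1 ≤ F.form x := by
  by_contra hcon
  push_neg at hcon
  obtain ⟨w, hw, hwb⟩ := exists_vert_min F
  have hc : ∀ x ∈ P.latticePoints, (0:ℤ) ∣ (F.form x - F.b) := by
    intro x hx
    have h1 := facet_min_le_lattice F hx
    have h2 := hcon x hx
    have : F.form x = F.b := by omega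
    simp [this]
  have := dvd_one_of_dvd_heights hgen F (vert_mem_latticePoints P hw) hwb hc
  simpa using this

lemma not_all_shifts (P : LatticePolytope n) (x v : Fin n → ℤ) (hv : v ≠ 0) :
    ¬ ∀ k : ℕ, (x + k • v) ∈ P.latticePoints := by
  intro hall
  obtain ⟨R, hR⟩ := carrier_coord_bound P
  obtain ⟨i, hi⟩ : ∃ i, v i ≠ 0 := by
    by_contra hc; push_neg at hc; exact hv (funext hc)
  obtain ⟨k, hk⟩ := exists_nat_gt (R + |(x i : ℝ)|)
  have hmem := hall k
  have hb := hR (toR (x + k • v)) hmem i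
  have hcoord : toR (x + k • v) i = (k : ℝ) * (v i : ℝ) + (x i : ℝ) := by
    simp [toR]; ring
  rw [hcoord] at hb
  have habs : (k : ℝ) * |(v i : ℝ)| - |(x i : ℝ)| ≤ |(k : ℝ) * (v i : ℝ) + (x i : ℝ)| := by
    have := abs_sub_abs_le_abs_sub ((k : ℝ) * (v i : ℝ)) (-(x i : ℝ))
    rw [abs_mul, abs_neg, sub_neg_eq_add] at this
    have hknn : |(k : ℝ)| = (k : ℝ) := abs_of_nonneg (by positivity)
    rw [hknn] at this
    linarith [this]
  have hv1 : (1 : ℝ) ≤ |(v i : ℝ)| := by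
    have : (1 : ℤ) ≤ |v i| := Int.one_le_abs hi
    calc (1:ℝ) = ((1:ℤ):ℝ) := by norm_num
      _ ≤ ((|v i| : ℤ) : ℝ) := by exact_mod_cast this
      _ = |(v i : ℝ)| := by push_cast; ring
  nlinarith [hb, habs, hv1, hk]

lemma latticePoints_add_of_base {P : LatticePolytope n} {v : Fin n → ℤ} {F : P.Facet}
    (hbf : P.IsBaseFacet v F) {x : Fin n → ℤ} (hx : x ∈ P.latticePoints)
    (hoff : F.b + 1 ≤ F.form x) : (x + v) ∈ P.latticePoints := by
  have hnot : toR x ∉ F.set := by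
    intro hmem
    have := (mem_fset_iff F hx).1 hmem
    omega
  exact hbf.2 x hx hnot

lemma base_facet_form_v {P : LatticePolytope n} (hgen : P.AffGen)
    {v : Fin n → ℤ} {F : P.Facet} (hbf : P.IsBaseFacet v F) : F.form v = -1 := by
  have hv := hbf.1
  set c : ℤ := -(F.form v) with hc
  -- step A : c ≥ 1
  have hc1 : 1 ≤ c := by
    by_contra hcle
    push_neg at hcle
    have hfv : 0 ≤ F.form v := by omega
    obtain ⟨x₁, hx₁, hx₁h⟩ := exists_lattice_off hgen F
    have hstep : ∀ k : ℕ, (x₁ + k • v) ∈ P.latticePoints ∧ F.b + 1 ≤ F.form (x₁ + k • v) := by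
      intro k
      induction k with
      | zero => simpa using ⟨hx₁, hx₁h⟩
      | succ m ih =>
          obtain ⟨ihm, ihh⟩ := ih
          have hnext := latticePoints_add_of_base hbf ihm ihh
          have heq : x₁ + (m + 1) • v = (x₁ + m • v) + v := by
            rw [succ_nsmul]; abel
          rw [heq]
          refine ⟨hnext, ?_⟩
          rw [map_add]
          omega
    exact not_all_shifts P x₁ v hv fun k => (hstep k).1
  -- step B : divisibility
  have hdvd : ∀ x ∈ P.latticePoints, c ∣ (F.form x - F.b) := by
    have key : ∀ N : ℕ, ∀ x ∈ P.latticePoints, (F.form x - F.b).toNat = N →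
        c ∣ (F.form x - F.b) := by
      intro N
      induction N using Nat.strong_induction_on with
      | _ N ih =>
        intro x hx hN
        have hnn := facet_min_le_lattice F hx
        by_cases h0 : F.form x = F.b
        · simp [h0]
        · have hpos : F.b + 1 ≤ F.form x := by omega
          have hx' := latticePoints_add_of_base hbf hx hpos
          have hnn' := facet_min_le_lattice F hx'
          have hval : F.form (x + v) - F.b = (F.form x - F.b) - c := by
            rw [map_add]; omega
          have hlt : (F.form (x + v) - F.b).toNat < N := by omega
          have := ih _ hlt (x + v) hx' rfl
          rw [hval] at this
          have h2 := this.add (dvd_refl c)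
          simpa using h2
    intro x hx
    exact key _ x hx rfl
  obtain ⟨w, hw, hwb⟩ := exists_vert_min F
  have := dvd_one_of_dvd_heights hgen F (vert_mem_latticePoints P hw) hwb hdvd
  have : c = 1 := Int.eq_one_of_dvd_one (by omega) this
  omega


/-! ### kernels and proportionality -/

lemma dotR_self_pos {a : Fin n → ℝ} (ha : a ≠ 0) : 0 < dotR a a := by
  have hne : ∃ i, a i ≠ 0 := by
    by_contra hc; push_neg at hc; exact ha (funext hc)
  obtain ⟨i, hi⟩ := hne
  have : ∀ j ∈ Finset.univ, 0 ≤ a j * a j := fun j _ => mul_self_nonneg _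
  have hlt : 0 < a i * a i := mul_self_pos.2 hi
  exact Finset.sum_pos' this ⟨i, Finset.mem_univ i, hlt⟩

lemma finrank_ker_dotL {a : Fin n → ℝ} (ha : a ≠ 0) :
    Module.finrank ℝ (LinearMap.ker (dotL a)) + 1 = n := by
  have hr := LinearMap.finrank_range_add_finrank_ker (dotL a)
  have hrange : LinearMap.range (dotL a) = ⊤ := by
    rcases Ideal.eq_bot_or_top (LinearMap.range (dotL a)) with h | h
    · exfalso
      have : dotL a a ∈ LinearMap.range (dotL a) := ⟨a, rfl⟩
      rw [h] at this
      simp only [Submodule.mem_bot] at this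
      exact absurd this (ne_of_gt (dotR_self_pos ha))
    · exact h
  rw [hrange] at hr
  simp only [finrank_top, Module.finrank_self] at hr
  have hpi : Module.finrank ℝ (Fin n → ℝ) = n := by
    simp [Module.finrank_pi]
  omega

lemma exists_ratio {a a' : Fin n → ℝ} (ha : a ≠ 0)
    (hker : LinearMap.ker (dotL a) ≤ LinearMap.ker (dotL a')) :
    ∃ lam : ℝ, ∀ x, dotR a' x = lam * dotR a x := by
  have hx₀ : dotR a a ≠ 0 := ne_of_gt (dotR_self_pos ha)
  refine ⟨dotR a' a / dotR a a, fun x => ?_⟩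
  have hmem : x - (dotR a x / dotR a a) • a ∈ LinearMap.ker (dotL a) := by
    simp only [LinearMap.mem_ker, map_sub, map_smul]
    show dotR a x - (dotR a x / dotR a a) • dotR a a = 0
    rw [smul_eq_mul, div_mul_cancel₀ _ hx₀, sub_self]
  have := hker hmem
  simp only [LinearMap.mem_ker, map_sub, map_smul] at this
  have h2 : dotR a' x - (dotR a x / dotR a a) * dotR a' a = 0 := by
    simp only [smul_eq_mul] at this; exact this
  field_simp at h2 ⊢
  linarith [h2]

lemma vectorSpan_le_ker {s : Set (Fin n → ℝ)} {a : Fin n → ℝ} {b : ℝ}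
    (h : ∀ x ∈ s, dotR a x = b) : vectorSpan ℝ s ≤ LinearMap.ker (dotL a) := by
  rw [vectorSpan_def, Submodule.span_le]
  rintro z hz
  rw [Set.mem_vsub] at hz
  obtain ⟨x, hx, y, hy, rfl⟩ := hz
  simp only [SetLike.mem_coe, LinearMap.mem_ker, vsub_eq_sub, map_sub]
  show dotR a x - dotR a y = 0
  rw [h x hx, h y hy, sub_self]

lemma interior_strict {P : LatticePolytope n} {p : Fin n → ℝ}
    (hp : p ∈ interior P.carrier) (F : P.Facet) : (F.b : ℝ) < formR F.form p := by
  rcases lt_or_eq_of_le (F.min_le p (interior_subset hp)) with h | h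
  · exact h
  exfalso
  obtain ⟨ε, hε, hball⟩ := Metric.isOpen_iff.1 isOpen_interior p hp
  obtain ⟨z₁, hz₁⟩ := F.surj 1
  set d := toR z₁ with hd
  have hdot : dotR (coeffs F.form) d = 1 := by
    rw [← formR_eq_dotR, hd, formR_toR, hz₁]; norm_num
  set t : ℝ := ε / (2 * (‖d‖ + 1)) with ht
  have hdnn : (0:ℝ) ≤ ‖d‖ := norm_nonneg d
  have htpos : 0 < t := by positivity
  have hq : p - t • d ∈ Metric.ball p ε := by
    rw [Metric.mem_ball, dist_eq_norm]
    have : p - t • d - p = -(t • d) := by abel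
    rw [this, norm_neg, norm_smul, Real.norm_eq_abs, abs_of_pos htpos]
    have hden : (0:ℝ) < ‖d‖ + 1 := by linarith
    have h1 : t * (‖d‖ + 1) = ε / 2 := by
      rw [ht]; field_simp
    have h1' : t * ‖d‖ + t = ε / 2 := by rw [← h1]; ring
    linarith
  have hmem : p - t • d ∈ P.carrier := interior_subset (hball hq)
  have := F.min_le _ hmem
  rw [formR_eq_dotR] at this
  rw [formR_eq_dotR] at h
  have hlin : dotR (coeffs F.form) (p - t • d)
      = dotR (coeffs F.form) p - t * dotR (coeffs F.form) d := by
    have : p - t • d = p + (-t) • d := by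
      funext i; simp; ring
    rw [this, dotR_add, dotR_smul]; ring
  rw [hlin, hdot] at this
  rw [← h] at this
  linarith

lemma facet_ext {P : LatticePolytope n} (F G : P.Facet)
    (h1 : F.form = G.form) (h2 : F.b = G.b) : F = G := by
  cases F; cases G
  cases h1; cases h2
  rfl

lemma coeffs_ne_zero {P : LatticePolytope n} (F : P.Facet) : coeffs F.form ≠ 0 := by
  intro h
  obtain ⟨z₁, hz₁⟩ := F.surj 1
  have h1 : dotR (coeffs F.form) (toR z₁) = 1 := by
    rw [← formR_eq_dotR, formR_toR, hz₁]; norm_num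
  rw [h] at h1
  simp [dotR] at h1

lemma other_facet_nonneg {P : LatticePolytope n} (hfd : P.IsFullDim)
    {v : Fin n → ℤ} {F : P.Facet} (hbf : P.IsBaseFacet v F)
    (G : P.Facet) (hne : G ≠ F) : 0 ≤ G.form v := by
  classical
  by_contra hneg
  push_neg at hneg
  have hGv : G.form v ≤ -1 := by omega
  set M : Finset (Fin n → ℤ) := P.verts.filter (fun w => G.form w = G.b) with hM
  by_cases hcase : ∃ w ∈ M, F.b + 1 ≤ F.form w
  · -- a vertex minimizing G off F : contradiction with minimality of G
    obtain ⟨w, hwM, hwoff⟩ := hcase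
    rw [hM, Finset.mem_filter] at hwM
    obtain ⟨hw, hwG⟩ := hwM
    have hwP := vert_mem_latticePoints P hw
    have hadd := latticePoints_add_of_base hbf hwP hwoff
    have := facet_min_le_lattice G hadd
    rw [map_add] at this
    omega
  · -- all minimizers of G on F : then G = F, contradiction
    push_neg at hcase
    have hMF : ∀ w ∈ M, F.form w = F.b := by
      intro w hwM
      have hw : w ∈ P.verts := (Finset.mem_filter.1 (hM ▸ hwM)).1
      have := facet_min_le_lattice F (vert_mem_latticePoints P hw)
      have := hcase w hwM
      omega
    set cF := coeffs F.form with hcF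
    set cG := coeffs G.form with hcG
    -- G.set lies on the hyperplane of F
    have hGsetF : ∀ x ∈ G.set, dotR cF x = (F.b : ℝ) := by
      intro x hx
      obtain ⟨hxc, hxb⟩ := hx
      have hmin : ∀ w ∈ P.verts.image toR, (G.b : ℝ) ≤ dotR cG w := by
        intro w hw
        simp only [Finset.mem_image] at hw
        obtain ⟨u, hu, rfl⟩ := hw
        rw [← formR_eq_dotR]
        exact G.min_le _ (vert_mem_carrier P hu)
      have hxG : dotR cG x = (G.b : ℝ) := by rw [← formR_eq_dotR]; exact hxb
      have hhull := argmin_subset hmin hxc hxG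
      have hsub : convexHull ℝ ↑((P.verts.image toR).filter (fun y => dotR cG y = (G.b:ℝ)))
          ⊆ {y | dotR cF y = (F.b : ℝ)} := by
        apply convexHull_min _ (convex_hyperplane (isLinearMap_dotR cF) _)
        intro y hy
        simp only [Finset.coe_filter, Finset.mem_image, Set.mem_setOf_eq] at hy
        obtain ⟨⟨u, hu, rfl⟩, hyG⟩ := hy
        have huG : G.form u = G.b := by
          rw [← formR_eq_dotR, formR_toR] at hyG
          exact_mod_cast hyG
        have huM : u ∈ M := by rw [hM, Finset.mem_filter]; exact ⟨hu, huG⟩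
        have := hMF u huM
        show dotR cF (toR u) = (F.b : ℝ)
        rw [← formR_eq_dotR, formR_toR, this]
      exact hsub hhull
    -- kernels coincide
    have hGsetG : ∀ x ∈ G.set, dotR cG x = (G.b : ℝ) := by
      rintro x ⟨-, hxb⟩
      rw [← formR_eq_dotR]
      exact hxb
    have hWF := vectorSpan_le_ker hGsetF
    have hWG := vectorSpan_le_ker hGsetG
    have hdim := G.dim
    have hFne : cF ≠ 0 := coeffs_ne_zero F
    have hGne : cG ≠ 0 := coeffs_ne_zero G
    have hkerF : LinearMap.ker (dotL cF) = vectorSpan ℝ G.set := by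
      symm
      apply Submodule.eq_of_le_of_finrank_le hWF ?_
      have h1 := finrank_ker_dotL hFne
      have h2 : Module.finrank ℝ (vectorSpan ℝ G.set) + 1 = n := hdim
      omega
    have hker : LinearMap.ker (dotL cF) ≤ LinearMap.ker (dotL cG) := hkerF ▸ hWG
    obtain ⟨lam, hlam⟩ := exists_ratio hFne hker
    -- lam is a positive integer-reciprocal pair : lam = 1
    obtain ⟨z₁, hz₁⟩ := F.surj 1
    obtain ⟨z₂, hz₂⟩ := G.surj 1
    have hl1 : (G.form z₁ : ℝ) = lam := by
      have := hlam (toR z₁)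
      rw [← formR_eq_dotR, ← formR_eq_dotR, formR_toR, formR_toR, hz₁] at this
      simpa using this
    have hl2 : (1 : ℝ) = lam * (F.form z₂ : ℝ) := by
      have := hlam (toR z₂)
      rw [← formR_eq_dotR, ← formR_eq_dotR, formR_toR, formR_toR, hz₂] at this
      exact_mod_cast this
    -- sign of lam : positive
    obtain ⟨p, hp⟩ := hfd
    obtain ⟨q, hq⟩ : ∃ q, q ∈ G.set := by
      obtain ⟨x, hx, hxb⟩ := G.attained
      exact ⟨x, hx, hxb⟩
    have hFq : dotR cF q = (F.b : ℝ) := hGsetF q hq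
    have hGq : dotR cG q = (G.b : ℝ) := hGsetG q hq
    have hFp := interior_strict hp F
    have hGp := interior_strict hp G
    rw [formR_eq_dotR] at hFp hGp
    have hident : dotR cG p - (G.b:ℝ) = lam * (dotR cF p - (F.b:ℝ)) := by
      rw [← hFq, ← hGq, hlam p, hlam q]; ring
    have hlampos : 0 < lam := by
      rcases le_or_gt lam 0 with h | h
      · nlinarith
      · exact h
    have hlam1 : lam = 1 := by
      have hint : G.form z₁ * F.form z₂ = 1 := by
        have : (G.form z₁ : ℝ) * (F.form z₂ : ℝ) = 1 := by
          rw [hl1]; linarith [hl2]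
        exact_mod_cast this
      rcases Int.eq_one_or_neg_one_of_mul_eq_one hint with h | h
      · rw [← hl1, h]; norm_num
      · exfalso
        rw [← hl1, h] at hlampos
        norm_num at hlampos
    -- the forms agree, hence the facets agree
    have hforms : G.form = F.form := by
      refine DFunLike.ext _ _ fun z => ?_
      have := hlam (toR z)
      rw [hlam1, one_mul, ← formR_eq_dotR, ← formR_eq_dotR, formR_toR, formR_toR] at this
      exact_mod_cast this
    have hbs : G.b = F.b := by
      obtain ⟨wG, hwG, hwGb⟩ := exists_vert_min G
      obtain ⟨wF, hwF, hwFb⟩ := exists_vert_min F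
      have h1 : F.b ≤ F.form wG := facet_min_le_lattice F (vert_mem_latticePoints P hwG)
      have h2 : G.b ≤ G.form wF := facet_min_le_lattice G (vert_mem_latticePoints P hwF)
      rw [hforms] at h2 hwGb
      omega
    exact hne (facet_ext G F hforms hbs)


/-! ### linear functionals as dot products -/

lemma linear_eq_dot {K : Type*} [Field K] (f : (Fin n → K) →ₗ[K] K) (x : Fin n → K) :
    f x = ∑ i, x i * f (Pi.single i 1) := by
  have hx : x = ∑ i, Pi.single i (x i) := (Finset.univ_sum_single x).symm
  calc f x = f (∑ i, Pi.single i (x i)) := by rw [← hx]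
    _ = ∑ i, f (Pi.single i (x i)) := map_sum f _ _
    _ = ∑ i, x i * f (Pi.single i 1) := by
        refine Finset.sum_congr rfl fun i _ => ?_
        have : Pi.single i (x i) = x i • (Pi.single i (1 : K) : Fin n → K) := by
          funext j
          by_cases h : j = i
          · subst h; simp
          · simp [Pi.single_apply, h]
        rw [this, map_smul, smul_eq_mul]

lemma dotR_comm (a x : Fin n → ℝ) : dotR a x = dotR x a := by
  simp [dotR, mul_comm]

lemma dotR_smul_left (a : Fin n → ℝ) (c : ℝ) (x : Fin n → ℝ) :
    dotR (c • a) x = c * dotR a x := by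
  rw [dotR_comm, dotR_smul, dotR_comm]

lemma dotR_add_left (a b x : Fin n → ℝ) : dotR (a + b) x = dotR a x + dotR b x := by
  rw [dotR_comm, dotR_add, dotR_comm x a, dotR_comm x b]

lemma dotR_neg_left (a x : Fin n → ℝ) : dotR (-a) x = -dotR a x := by
  have := dotR_smul_left a (-1) x
  simpa using this

/-- an annihilating vector outside the span of `a`, when `S` has codimension `≥ 2`. -/
lemma exists_ann_not_span (S : Submodule ℝ (Fin n → ℝ)) (a : Fin n → ℝ) (ha : a ≠ 0)
    (hd : Module.finrank ℝ S + 2 ≤ n) :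
    ∃ g : Fin n → ℝ, (∀ x ∈ S, dotR g x = 0) ∧ g ∉ Submodule.span ℝ {a} := by
  classical
  have hdim : Module.finrank ℝ (Fin n → ℝ) = n := by simp [Module.finrank_pi]
  have hquot := Submodule.finrank_quotient_add_finrank S
  have hann : Module.finrank ℝ S.dualAnnihilator = Module.finrank ℝ ((Fin n → ℝ) ⧸ S) :=
    (LinearEquiv.finrank_eq (Subspace.quotEquivAnnihilator S)).symm
  have h2 : 2 ≤ Module.finrank ℝ S.dualAnnihilator := by
    rw [hann]; omega
  have hdla : dotL a ≠ 0 := by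
    intro h
    have : dotL a a = 0 := by rw [h]; rfl
    exact absurd this (ne_of_gt (dotR_self_pos ha))
  have hnotle : ¬ (S.dualAnnihilator ≤ Submodule.span ℝ {dotL a}) := by
    intro hle
    have := Submodule.finrank_mono hle
    rw [finrank_span_singleton hdla] at this
    omega
  obtain ⟨f, hfann, hfns⟩ := Set.not_subset.1 fun h => hnotle fun x hx => h hx
  set g : Fin n → ℝ := fun i => f (Pi.single i 1) with hg
  have hfg : ∀ x, f x = dotR g x := by
    intro x
    rw [linear_eq_dot f x]
    simp only [dotR, hg]
    exact Finset.sum_congr rfl fun i _ => mul_comm _ _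
  refine ⟨g, ?_, ?_⟩
  · intro x hx
    rw [← hfg]
    exact (Submodule.mem_dualAnnihilator f).1 hfann x hx
  · intro hmem
    apply hfns
    obtain ⟨c, hc⟩ := Submodule.mem_span_singleton.1 hmem
    have : f = c • dotL a := by
      apply LinearMap.ext
      intro x
      rw [hfg]
      show dotR g x = c * dotR a x
      rw [← hc, dotR_smul_left]
    rw [this]
    exact Submodule.smul_mem _ c (Submodule.mem_span_singleton_self _)

/-- rational (integral) annihilator of a set of integer vectors spanning a proper
subspace. -/
lemma rat_ann (Z : Finset (Fin n → ℤ))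
    (hne : Submodule.span ℝ (toR '' (Z : Set (Fin n → ℤ))) ≠ ⊤) :
    ∃ q' : Fin n → ℤ, q' ≠ 0 ∧ ∀ z ∈ Z, ∑ i, q' i * z i = 0 := by
  classical
  set toQ : (Fin n → ℤ) → (Fin n → ℚ) := fun z i => (z i : ℚ) with htoQ
  set W : Submodule ℚ (Fin n → ℚ) := Submodule.span ℚ (toQ '' (Z : Set (Fin n → ℤ))) with hW
  -- W is proper
  have hWne : W ≠ ⊤ := by
    intro htop
    apply hne
    have hcast : ∀ x : Fin n → ℚ, x ∈ W →
        (fun i => (x i : ℝ)) ∈ Submodule.span ℝ (toR '' (Z : Set (Fin n → ℤ))) := by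
      intro x hx
      induction hx using Submodule.span_induction with
      | mem y hy =>
          obtain ⟨z, hz, rfl⟩ := hy
          exact Submodule.subset_span ⟨z, hz, by funext i; simp [htoQ, toR]⟩
      | zero =>
          have : (fun i => ((0 : Fin n → ℚ) i : ℝ)) = 0 := by funext i; simp
          rw [this]; exact Submodule.zero_mem _
      | add y z _ _ hy hz =>
          have : (fun i => (((y + z) : Fin n → ℚ) i : ℝ))
              = (fun i => (y i : ℝ)) + fun i => (z i : ℝ) := by funext i; push_cast; simp
          rw [this]; exact Submodule.add_mem _ hy hz
      | smul c y _ hy =>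
          have : (fun i => (((c • y) : Fin n → ℚ) i : ℝ))
              = (c : ℝ) • fun i => (y i : ℝ) := by funext i; push_cast; simp
          rw [this]; exact Submodule.smul_mem _ _ hy
    rw [Submodule.eq_top_iff']
    intro x
    have hsingle : ∀ i, (Pi.single i (1:ℝ) : Fin n → ℝ) ∈ Submodule.span ℝ (toR '' (Z : Set (Fin n → ℤ))) := by
      intro i
      have hQ : (Pi.single i (1:ℚ) : Fin n → ℚ) ∈ W := by rw [htop]; trivial
      have := hcast _ hQ
      have heq : (fun j => ((Pi.single i (1:ℚ) : Fin n → ℚ) j : ℝ))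
          = (Pi.single i (1:ℝ) : Fin n → ℝ) := by
        funext j
        by_cases h : j = i
        · subst h; simp
        · simp [Pi.single_apply, h]
      rwa [heq] at this
    have hx : x = ∑ i, x i • (Pi.single i (1:ℝ) : Fin n → ℝ) := by
      rw [← Finset.univ_sum_single x]
      refine Finset.sum_congr rfl fun i _ => ?_
      funext j
      by_cases h : j = i
      · subst h; simp
      · simp [Pi.single_apply, h]
    rw [hx]
    exact Submodule.sum_mem _ fun i _ => Submodule.smul_mem _ _ (hsingle i)
  -- a rational annihilating functional
  obtain ⟨x0, hx0⟩ : ∃ x, x ∉ W := by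
    by_contra hcon
    push_neg at hcon
    exact hWne (Submodule.eq_top_iff'.2 hcon)
  have hq : (Submodule.mkQ W) x0 ≠ 0 := by
    intro h
    exact hx0 ((Submodule.Quotient.mk_eq_zero W).1 h)
  obtain ⟨φ, hφ⟩ : ∃ φ : Module.Dual ℚ ((Fin n → ℚ) ⧸ W), φ ((Submodule.mkQ W) x0) ≠ 0 := by
    by_contra hcon
    push_neg at hcon
    exact hq ((Module.forall_dual_apply_eq_zero_iff ℚ _).1 hcon)
  set f : (Fin n → ℚ) →ₗ[ℚ] ℚ := φ.comp (Submodule.mkQ W) with hf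
  set qv : Fin n → ℚ := fun i => f (Pi.single i 1) with hqv
  have hfd : ∀ x, f x = ∑ i, x i * qv i := fun x => linear_eq_dot f x
  have hqvne : qv ≠ 0 := by
    intro h
    apply hφ
    show f x0 = 0
    rw [hfd, h]
    simp
  have hqvann : ∀ z ∈ Z, ∑ i, (z i : ℚ) * qv i = 0 := by
    intro z hz
    have : f (toQ z) = 0 := by
      show φ ((Submodule.mkQ W) (toQ z)) = 0
      have : (Submodule.mkQ W) (toQ z) = 0 := by
        rw [Submodule.mkQ_apply, Submodule.Quotient.mk_eq_zero]
        exact Submodule.subset_span ⟨z, hz, rfl⟩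
      rw [this, map_zero]
    rw [hfd] at this
    exact this
  -- clear denominators
  set N : ℕ := ∏ j, (qv j).den with hN
  have hNpos : 0 < N := Finset.prod_pos fun j _ => (qv j).pos
  set q' : Fin n → ℤ := fun i => ((N : ℚ) * qv i).num with hq'
  have hden : ∀ i, ((qv i).den : ℤ) ∣ (N : ℤ) := by
    intro i
    exact_mod_cast Int.natCast_dvd_natCast.2 (Finset.dvd_prod_of_mem _ (Finset.mem_univ i))
  have key : ∀ i, ∃ m : ℤ, ((N:ℚ) * qv i) = (m : ℚ) := by
    intro i
    obtain ⟨k, hk⟩ := hden i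
    refine ⟨k * (qv i).num, ?_⟩
    have hd0 : ((qv i).den : ℚ) ≠ 0 := by
      have := (qv i).den_nz
      exact_mod_cast Nat.cast_ne_zero.2 this
    have h1 : ((qv i).den : ℚ) * qv i = ((qv i).num : ℚ) := by
      nth_rewrite 2 [← Rat.num_div_den (qv i)]
      field_simp
    have h2 : (N:ℚ) = ((qv i).den : ℚ) * (k : ℚ) := by
      have : ((N:ℤ) : ℚ) = ((((qv i).den : ℤ) * k : ℤ) : ℚ) := by rw [← hk]
      push_cast at this ⊢
      linarith [this]
    rw [h2]
    push_cast
    calc ((qv i).den : ℚ) * (k:ℚ) * qv i = (k:ℚ) * (((qv i).den : ℚ) * qv i) := by ring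
      _ = (k:ℚ) * ((qv i).num : ℚ) := by rw [h1]
  have hq'cast : ∀ i, ((q' i : ℚ)) = (N : ℚ) * qv i := by
    intro i
    obtain ⟨m, hm⟩ := key i
    rw [hq']
    simp only [hm, Rat.num_intCast]
  refine ⟨q', ?_, ?_⟩
  · intro h0
    obtain ⟨i, hi⟩ : ∃ i, qv i ≠ 0 := by
      by_contra hc; push_neg at hc; exact hqvne (funext hc)
    have : (q' i : ℚ) = 0 := by rw [h0]; simp
    rw [hq'cast i] at this
    rcases mul_eq_zero.1 this with h | h
    · have : (N:ℚ) ≠ 0 := by positivity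
      exact this h
    · exact hi h
  · intro z hz
    have hcast : ((∑ i, q' i * z i : ℤ) : ℚ) = (N:ℚ) * ∑ i, (z i : ℚ) * qv i := by
      push_cast
      rw [Finset.mul_sum]
      refine Finset.sum_congr rfl fun i _ => ?_
      rw [show ((q' i : ℚ)) = (N:ℚ) * qv i from hq'cast i]
      ring
    rw [hqvann z hz, mul_zero] at hcast
    exact_mod_cast hcast


/-! ### primitive integral normal -/

lemma intDotHom_single (a : Fin n → ℤ) (j : Fin n) :
    intDotHom a (Pi.single j 1) = a j := by
  show (∑ i, a i * (Pi.single j (1:ℤ) : Fin n → ℤ) i) = a j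
  rw [Finset.sum_eq_single j]
  · simp
  · intro i _ hij
    simp [Pi.single_apply, hij]
  · simp

lemma intDotHom_neg (a : Fin n → ℤ) (z : Fin n → ℤ) :
    intDotHom (-a) z = -intDotHom a z := by
  show (∑ i, (-a) i * z i) = -∑ i, a i * z i
  rw [← Finset.sum_neg_distrib]
  exact Finset.sum_congr rfl fun i _ => by simp

lemma exists_primitive (q' : Fin n → ℤ) (hq : q' ≠ 0) :
    ∃ (A : Fin n → ℤ) (c : ℝ), 0 < c ∧ (∀ i, (A i : ℝ) = c * (q' i : ℝ)) ∧
      Function.Surjective (intDotHom A) := by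
  classical
  obtain ⟨g, hH⟩ := Int.subgroup_cyclic (intDotHom q').range
  obtain ⟨j, hj⟩ : ∃ j, q' j ≠ 0 := by
    by_contra hc; push_neg at hc; exact hq (funext hc)
  have hqj : q' j ∈ (intDotHom q').range := ⟨Pi.single j 1, intDotHom_single q' j⟩
  have hgne : g ≠ 0 := by
    rintro rfl
    rw [hH, AddSubgroup.mem_closure_singleton] at hqj
    obtain ⟨k, hk⟩ := hqj
    simp at hk
    exact hj hk.symm
  have hdvd : ∀ z : Fin n → ℤ, g ∣ intDotHom q' z := by
    intro z
    have : intDotHom q' z ∈ (intDotHom q').range := ⟨z, rfl⟩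
    rw [hH, AddSubgroup.mem_closure_singleton] at this
    obtain ⟨k, hk⟩ := this
    exact ⟨k, by rw [← hk, zsmul_eq_mul]; push_cast; ring⟩
  have hdvd' : ∀ i, g ∣ q' i := by
    intro i
    have := hdvd (Pi.single i 1)
    rwa [intDotHom_single] at this
  set A₀ : Fin n → ℤ := fun i => q' i / g with hA₀
  have hfact : ∀ i, q' i = g * A₀ i := fun i => (Int.mul_ediv_cancel' (hdvd' i)).symm
  have hdotfact : ∀ z, intDotHom q' z = g * intDotHom A₀ z := by
    intro z
    show (∑ i, q' i * z i) = g * ∑ i, A₀ i * z i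
    rw [Finset.mul_sum]
    exact Finset.sum_congr rfl fun i _ => by rw [hfact i]; ring
  have hsurj : Function.Surjective (intDotHom A₀) := by
    intro k
    have : k • g ∈ AddSubgroup.closure ({g} : Set ℤ) :=
      AddSubgroup.mem_closure_singleton.2 ⟨k, rfl⟩
    rw [← hH] at this
    obtain ⟨z, hz⟩ := this
    refine ⟨z, ?_⟩
    have : g * intDotHom A₀ z = g * k := by
      rw [← hdotfact, hz, zsmul_eq_mul]; push_cast; ring
    exact mul_left_cancel₀ hgne this
  have hsurjneg : Function.Surjective (intDotHom (-A₀)) := by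
    intro k
    obtain ⟨z, hz⟩ := hsurj (-k)
    exact ⟨z, by rw [intDotHom_neg, hz]; ring⟩
  rcases lt_or_gt_of_ne hgne with hneg | hpos
  · refine ⟨-A₀, -((g:ℝ))⁻¹, ?_, ?_, hsurjneg⟩
    · have h1 : (g:ℝ) < 0 := by exact_mod_cast hneg
      have h2 : (g:ℝ)⁻¹ < 0 := inv_lt_zero.2 h1
      linarith
    · intro i
      have hgR : (g:ℝ) ≠ 0 := by exact_mod_cast hgne
      have : (q' i : ℝ) = (g:ℝ) * (A₀ i : ℝ) := by exact_mod_cast congrArg (Int.cast : ℤ → ℝ) (hfact i)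
      simp only [Pi.neg_apply]
      push_cast
      rw [this]
      field_simp
  · refine ⟨A₀, ((g:ℝ))⁻¹, ?_, ?_, hsurj⟩
    · have : (0:ℝ) < g := by exact_mod_cast hpos
      positivity
    · intro i
      have hgR : (g:ℝ) ≠ 0 := by exact_mod_cast hgne
      have : (q' i : ℝ) = (g:ℝ) * (A₀ i : ℝ) := by exact_mod_cast congrArg (Int.cast : ℤ → ℝ) (hfact i)
      rw [this]
      field_simp

/-! ### the quadratic form and sign vectors -/

lemma dotR_self_nonneg (a : Fin n → ℝ) : 0 ≤ dotR a a :=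
  Finset.sum_nonneg fun i _ => mul_self_nonneg _

lemma dotR_sub (a x y : Fin n → ℝ) : dotR a (x - y) = dotR a x - dotR a y := by
  have : x - y = x + (-1 : ℝ) • y := by funext i; simp; ring
  rw [this, dotR_add, dotR_smul]; ring

lemma dotR_sub_left (a b x : Fin n → ℝ) : dotR (a - b) x = dotR a x - dotR b x := by
  rw [dotR_comm, dotR_sub, dotR_comm x a, dotR_comm x b]

def QP (q : (Fin n → ℝ) × ℝ) : ℝ := dotR q.1 q.1 + q.2 * q.2

lemma QP_pos {q : (Fin n → ℝ) × ℝ} (hq : q ≠ 0) : 0 < QP q := by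
  have h1 := dotR_self_nonneg q.1
  have h2 := mul_self_nonneg q.2
  rcases eq_or_ne q.1 0 with ha | ha
  · have hb : q.2 ≠ 0 := by
      intro hb; exact hq (Prod.ext ha hb)
    have : 0 < q.2 * q.2 := mul_self_pos.2 hb
    unfold QP; linarith
  · have := dotR_self_pos ha
    unfold QP; linarith

lemma QP_expand (α β : ℝ) (A C : Fin n → ℝ) :
    dotR (α • A + β • C) (α • A + β • C)
      = α^2 * dotR A A + 2*α*β*dotR A C + β^2 * dotR C C := by
  rw [dotR_add_left, dotR_smul_left, dotR_smul_left, dotR_add, dotR_add,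
      dotR_smul, dotR_smul, dotR_smul, dotR_smul, dotR_comm C A]
  ring

lemma QP_combo {α β : ℝ} (hab : α + β = 1) (x y : (Fin n → ℝ) × ℝ) :
    QP (α • x + β • y) = α * QP x + β * QP y - α * β * QP (x - y) := by
  have hβ : β = 1 - α := by linarith
  subst hβ
  unfold QP
  have h1 : (α • x + (1-α) • y).1 = α • x.1 + (1-α) • y.1 := rfl
  have h2 : (α • x + (1-α) • y).2 = α * x.2 + (1-α) * y.2 := rfl
  rw [h1, h2, QP_expand]
  have h3 : (x - y).1 = x.1 - y.1 := rfl
  have h4 : (x - y).2 = x.2 - y.2 := rfl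
  rw [h3, h4, dotR_sub_left, dotR_sub, dotR_sub, dotR_comm y.1 x.1]
  ring

def sgnv (a : Fin n → ℝ) : Fin n → ℝ := fun i => if 0 ≤ a i then 1 else -1

def absSum (a : Fin n → ℝ) : ℝ := ∑ i, |a i|

lemma absSum_nonneg (a : Fin n → ℝ) : 0 ≤ absSum a :=
  Finset.sum_nonneg fun i _ => abs_nonneg _

lemma abs_le_absSum (a : Fin n → ℝ) (i : Fin n) : |a i| ≤ absSum a :=
  Finset.single_le_sum (fun j _ => abs_nonneg (a j)) (Finset.mem_univ i)

lemma absSum_eq_zero {a : Fin n → ℝ} (h : absSum a = 0) : a = 0 := by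
  funext i
  have h1 := abs_le_absSum a i
  have := abs_nonneg (a i)
  have : |a i| = 0 := le_antisymm (h ▸ h1) this
  simpa using this

lemma norm_sgnv_le (a : Fin n → ℝ) : ‖sgnv a‖ ≤ 1 := by
  rcases Nat.eq_zero_or_pos n with hn | hn
  · subst hn
    have : sgnv a = 0 := by funext i; exact absurd i.2 (by omega)
    rw [this, norm_zero]
    norm_num
  · apply pi_norm_le_iff_of_nonneg (by norm_num) |>.2
    intro i
    show ‖sgnv a i‖ ≤ 1
    unfold sgnv
    split_ifs <;> simp

lemma dotR_sgnv (a : Fin n → ℝ) : dotR a (sgnv a) = absSum a := by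
  unfold dotR sgnv absSum
  refine Finset.sum_congr rfl fun i _ => ?_
  split_ifs with h
  · rw [abs_of_nonneg h]; ring
  · rw [abs_of_neg (not_le.1 h)]; ring

lemma abs_dotR_le (a p : Fin n → ℝ) : |dotR a p| ≤ absSum a * ‖p‖ := by
  unfold dotR
  calc |∑ i, a i * p i| ≤ ∑ i, |a i * p i| := Finset.abs_sum_le_sum_abs _ _
    _ ≤ ∑ i, |a i| * ‖p‖ := by
        refine Finset.sum_le_sum fun i _ => ?_
        rw [abs_mul]
        exact mul_le_mul_of_nonneg_left (norm_le_pi_norm p i) (abs_nonneg _)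
    _ = absSum a * ‖p‖ := by rw [absSum, Finset.sum_mul]

lemma ell_lower {P : LatticePolytope n} {p : Fin n → ℝ} {ε : ℝ} (hε : 0 < ε)
    (hball : Metric.ball p ε ⊆ P.carrier) {a : Fin n → ℝ} {b : ℝ}
    (hC : ∀ w ∈ P.verts, b ≤ dotR a (toR w)) :
    ε/2 * absSum a ≤ dotR a p - b := by
  set x : Fin n → ℝ := p - (ε/2) • sgnv a with hx
  have hxball : x ∈ Metric.ball p ε := by
    rw [Metric.mem_ball, dist_eq_norm]
    have : x - p = -((ε/2) • sgnv a) := by rw [hx]; abel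
    rw [this, norm_neg, norm_smul, Real.norm_eq_abs, abs_of_pos (by linarith)]
    have := norm_sgnv_le a
    nlinarith
  have hmem : x ∈ P.carrier := hball hxball
  have := le_on_carrier hC x hmem
  have hdx : dotR a x = dotR a p - (ε/2) * absSum a := by
    rw [hx, dotR_sub, dotR_smul, dotR_sgnv]
  rw [hdx] at this
  linarith

lemma exists_ball {P : LatticePolytope n} (hfd : P.IsFullDim) :
    ∃ (p : Fin n → ℝ) (ε : ℝ), 0 < ε ∧ Metric.ball p ε ⊆ P.carrier ∧ p ∈ P.carrier := by
  obtain ⟨p, hp⟩ := hfd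
  obtain ⟨ε, hε, hball⟩ := Metric.isOpen_iff.1 isOpen_interior p hp
  exact ⟨p, ε, hε, fun q hq => interior_subset (hball hq), interior_subset hp⟩


/-! ### the H-representation lemma -/

lemma toR_sub (x y : Fin n → ℤ) : toR (x - y) = toR x - toR y := by
  funext i; simp [toR]

lemma dotR_toR (a z : Fin n → ℤ) : dotR (toR a) (toR z) = ((intDotHom a z : ℤ) : ℝ) := by
  show (∑ i, (a i : ℝ) * (z i : ℝ)) = ((∑ i, a i * z i : ℤ) : ℝ)
  push_cast
  rfl

set_option maxHeartbeats 2000000 in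
lemma hrep {P : LatticePolytope n} (hfd : P.IsFullDim) {y : Fin n → ℝ}
    (hy : y ∉ P.carrier) : ∃ G : P.Facet, formR G.form y < (G.b : ℝ) := by
  classical
  obtain ⟨p, ε, hε, hball, hpcar⟩ := exists_ball hfd
  set C : Set ((Fin n → ℝ) × ℝ) := {q | ∀ w ∈ P.verts, q.2 ≤ dotR q.1 (toR w)} with hCdef
  set ell : ((Fin n → ℝ) × ℝ) → ℝ := fun q => dotR q.1 p - q.2 with helldef
  set hfun : ((Fin n → ℝ) × ℝ) → ℝ := fun q => dotR q.1 y - q.2 with hhdef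
  have hellC : ∀ q ∈ C, ε/2 * absSum q.1 ≤ ell q := fun q hq => ell_lower hε hball hq
  have hellnn : ∀ q ∈ C, 0 ≤ ell q := fun q hq =>
    le_trans (by have := absSum_nonneg q.1; positivity) (hellC q hq)
  have hell0 : ∀ q ∈ C, ell q = 0 → q = 0 := by
    intro q hq h0
    have h1 := hellC q hq
    rw [h0] at h1
    have h2 : absSum q.1 = 0 := le_antisymm (by nlinarith [absSum_nonneg q.1]) (absSum_nonneg q.1)
    have h3 : q.1 = 0 := absSum_eq_zero h2
    have h4 : ell q = -q.2 := by rw [helldef]; simp [h3, dotR]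
    rw [h0] at h4
    refine Prod.ext h3 ?_
    show q.2 = 0
    linarith
  have hellpos : ∀ q ∈ C, q ≠ 0 → 0 < ell q := by
    intro q hq hne
    rcases lt_or_eq_of_le (hellnn q hq) with h | h
    · exact h
    · exact absurd (hell0 q hq h.symm) hne
  have hell_smul : ∀ (c : ℝ) (q : (Fin n → ℝ) × ℝ), ell (c • q) = c * ell q := by
    intro c q
    show dotR (c • q.1) p - c * q.2 = c * (dotR q.1 p - q.2)
    rw [dotR_smul_left]; ring
  have hell_add : ∀ q r : (Fin n → ℝ) × ℝ, ell (q + r) = ell q + ell r := by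
    intro q r
    show dotR (q.1 + r.1) p - (q.2 + r.2) = _
    rw [dotR_add_left]; ring
  have hh_smul : ∀ (c : ℝ) (q : (Fin n → ℝ) × ℝ), hfun (c • q) = c * hfun q := by
    intro c q
    show dotR (c • q.1) y - c * q.2 = c * (dotR q.1 y - q.2)
    rw [dotR_smul_left]; ring
  have hh_add : ∀ q r : (Fin n → ℝ) × ℝ, hfun (q + r) = hfun q + hfun r := by
    intro q r
    show dotR (q.1 + r.1) y - (q.2 + r.2) = _
    rw [dotR_add_left]; ring
  have hCsmul : ∀ (c : ℝ), 0 ≤ c → ∀ q ∈ C, c • q ∈ C := by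
    intro c hc q hq w hw
    show c * q.2 ≤ dotR (c • q.1) (toR w)
    rw [dotR_smul_left]
    exact mul_le_mul_of_nonneg_left (hq w hw) hc
  -- separation
  obtain ⟨f, u, hfyu, hfcar⟩ :=
    geometric_hahn_banach_point_closed (carrier_convex P) (carrier_closed P) hy
  set a₀ : Fin n → ℝ := fun i => f (Pi.single i 1) with ha₀
  have hfa : ∀ x, f x = dotR a₀ x := by
    intro x
    have := linear_eq_dot (f : (Fin n → ℝ) →ₗ[ℝ] ℝ) x
    simp only [ContinuousLinearMap.coe_coe] at this
    rw [this]
    simp only [dotR, ha₀]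
    exact Finset.sum_congr rfl fun i _ => mul_comm _ _
  set q₀ : (Fin n → ℝ) × ℝ := (a₀, u) with hq₀
  have hq₀C : q₀ ∈ C := by
    intro w hw
    show u ≤ dotR a₀ (toR w)
    rw [← hfa]
    exact le_of_lt (hfcar _ (vert_mem_carrier P hw))
  have hq₀neg : hfun q₀ < 0 := by
    show dotR a₀ y - u < 0
    rw [← hfa]
    linarith
  have hellq₀ : 0 < ell q₀ := by
    show 0 < dotR a₀ p - u
    rw [← hfa]
    linarith [hfcar p hpcar]
  -- the compact base and the distinguished point e
  set B : Set ((Fin n → ℝ) × ℝ) := C ∩ {q | ell q = 1} with hBdef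
  set q₁ : (Fin n → ℝ) × ℝ := (ell q₀)⁻¹ • q₀ with hq₁
  have hq₁B : q₁ ∈ B := by
    constructor
    · exact hCsmul _ (le_of_lt (inv_pos.2 hellq₀)) q₀ hq₀C
    · show ell q₁ = 1
      rw [hq₁, hell_smul]
      field_simp
  have hq₁neg : hfun q₁ < 0 := by
    rw [hq₁, hh_smul]
    exact mul_neg_of_pos_of_neg (inv_pos.2 hellq₀) hq₀neg
  have hcont_dot : ∀ c : Fin n → ℝ, Continuous (fun q : (Fin n → ℝ) × ℝ => dotR q.1 c) := by
    intro c
    unfold dotR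
    exact continuous_finset_sum _ fun i _ =>
      (((continuous_apply i).comp continuous_fst).mul continuous_const)
  have hcont_ell : Continuous ell := (hcont_dot p).sub continuous_snd
  have hcont_h : Continuous hfun := (hcont_dot y).sub continuous_snd
  have hcont_QP : Continuous (QP (n := n)) := by
    unfold QP dotR
    refine Continuous.add ?_ (continuous_snd.mul continuous_snd)
    exact continuous_finset_sum _ fun i _ =>
      ((continuous_apply i).comp continuous_fst).mul ((continuous_apply i).comp continuous_fst)
  have hCclosed : IsClosed C := by
    have hCeq : C = ⋂ w ∈ P.verts, {q : (Fin n → ℝ) × ℝ | q.2 ≤ dotR q.1 (toR w)} := by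
      ext q
      simp only [hCdef, Set.mem_setOf_eq, Set.mem_iInter]
    rw [hCeq]
    exact isClosed_biInter fun w hw => isClosed_le continuous_snd (hcont_dot _)
  have hBclosed : IsClosed B := hCclosed.inter (isClosed_eq hcont_ell continuous_const)
  have hBbdd : Bornology.IsBounded B := by
    rw [Metric.isBounded_iff_subset_closedBall 0]
    refine ⟨2/ε + (2/ε * ‖p‖ + 1), fun q hq => ?_⟩
    obtain ⟨hqC, hqell⟩ := hq
    have habs : absSum q.1 ≤ 2/ε := by
      have h2 : ell q = 1 := hqell
      have h1 := hellC q hqC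
      rw [h2] at h1
      rw [le_div_iff₀ hε]
      nlinarith
    have h1 : ‖q.1‖ ≤ absSum q.1 := by
      rcases Nat.eq_zero_or_pos n with hn | hn
      · subst hn
        have : q.1 = 0 := by funext i; exact absurd i.2 (by omega)
        rw [this, norm_zero]; exact absSum_nonneg _
      · refine pi_norm_le_iff_of_nonneg (absSum_nonneg _) |>.2 fun i => ?_
        exact abs_le_absSum q.1 i
    have h2 : |q.2| ≤ 2/ε * ‖p‖ + 1 := by
      have : q.2 = dotR q.1 p - 1 := by
        have : ell q = 1 := hqell
        rw [helldef] at this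
        simp only at this
        linarith
      rw [this]
      have h3 := abs_dotR_le q.1 p
      have h4 : absSum q.1 * ‖p‖ ≤ 2/ε * ‖p‖ :=
        mul_le_mul_of_nonneg_right habs (norm_nonneg p)
      calc |dotR q.1 p - 1| ≤ |dotR q.1 p| + 1 := by
            have := abs_sub_abs_le_abs_sub (dotR q.1 p) (1:ℝ)
            have h5 := abs_sub (dotR q.1 p) (1:ℝ)
            have := abs_abs (dotR q.1 p)
            calc |dotR q.1 p - 1| ≤ |dotR q.1 p| + |(1:ℝ)| := abs_sub _ _
              _ = |dotR q.1 p| + 1 := by norm_num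
        _ ≤ 2/ε * ‖p‖ + 1 := by linarith
    rw [Metric.mem_closedBall, dist_zero_right, Prod.norm_def]
    have hee : 0 < 2/ε := by positivity
    apply max_le
    · calc ‖q.1‖ ≤ 2/ε := le_trans h1 habs
        _ ≤ _ := by
          have h6 : (0:ℝ) ≤ 2/ε * ‖p‖ := by positivity
          linarith
    · calc ‖q.2‖ = |q.2| := rfl
        _ ≤ 2/ε * ‖p‖ + 1 := h2
        _ ≤ _ := by linarith
  have hBcpt : IsCompact B := Metric.isCompact_of_isClosed_isBounded hBclosed hBbdd
  obtain ⟨e₁, he₁B, he₁min⟩ := hBcpt.exists_isMinOn ⟨q₁, hq₁B⟩ hcont_h.continuousOn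
  set B₁ : Set ((Fin n → ℝ) × ℝ) := B ∩ {q | hfun q = hfun e₁} with hB₁def
  have hB₁cpt : IsCompact B₁ := hBcpt.inter_right (isClosed_eq hcont_h continuous_const)
  obtain ⟨e, heB₁, heQmax⟩ := hB₁cpt.exists_isMaxOn ⟨e₁, he₁B, rfl⟩ hcont_QP.continuousOn
  have heB : e ∈ B := heB₁.1
  have heC : e ∈ C := heB.1
  have helle : ell e = 1 := heB.2
  have hemin : ∀ q ∈ B, hfun e ≤ hfun q := by
    intro q hq
    have h1 : hfun e = hfun e₁ := heB₁.2
    rw [h1]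
    exact he₁min hq
  have heneg : hfun e < 0 := lt_of_le_of_lt (hemin q₁ hq₁B) hq₁neg
  have he1ne : e.1 ≠ 0 := by
    intro h0
    have h1 : ell e = -e.2 := by rw [helldef]; simp [h0, dotR]
    have h2 : hfun e = -e.2 := by rw [hhdef]; simp [h0, dotR]
    rw [helle] at h1
    rw [h2, ← h1] at heneg
    norm_num at heneg
  -- cone extremality of e
  have hext : ∀ u' w', u' ∈ C → w' ∈ C → u' + w' = (2:ℝ) • e → ∃ μ : ℝ, u' = μ • e := by
    intro u' w' huC hwC hsum
    rcases eq_or_ne u' 0 with rfl | hu0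
    · exact ⟨0, by simp⟩
    rcases eq_or_ne w' 0 with rfl | hw0
    · exact ⟨2, by rw [← hsum]; simp⟩
    have hlu := hellpos u' huC hu0
    have hlw := hellpos w' hwC hw0
    have hsumell : ell u' + ell w' = 2 := by
      have h1 : ell (u' + w') = ell u' + ell w' := hell_add u' w'
      rw [hsum, hell_smul, helle] at h1
      linarith
    set α : ℝ := ell u' / 2 with hα
    set β : ℝ := ell w' / 2 with hβ
    have hαpos : 0 < α := div_pos hlu two_pos
    have hβpos : 0 < β := div_pos hlw two_pos
    have hαβ : α + β = 1 := by
      rw [hα, hβ, ← add_div, hsumell]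
      norm_num
    set u'' : (Fin n → ℝ) × ℝ := (ell u')⁻¹ • u' with hu''
    set w'' : (Fin n → ℝ) × ℝ := (ell w')⁻¹ • w' with hw''
    have hu''B : u'' ∈ B := by
      refine ⟨hCsmul _ (le_of_lt (inv_pos.2 hlu)) u' huC, ?_⟩
      show ell u'' = 1
      rw [hu'', hell_smul]
      exact inv_mul_cancel₀ (ne_of_gt hlu)
    have hw''B : w'' ∈ B := by
      refine ⟨hCsmul _ (le_of_lt (inv_pos.2 hlw)) w' hwC, ?_⟩
      show ell w'' = 1
      rw [hw'', hell_smul]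
      exact inv_mul_cancel₀ (ne_of_gt hlw)
    have hcombo : α • u'' + β • w'' = e := by
      rw [hu'', hw'', smul_smul, smul_smul]
      have h1 : α * (ell u')⁻¹ = 1/2 := by
        rw [hα, div_mul_eq_mul_div, mul_inv_cancel₀ (ne_of_gt hlu)]
      have h2 : β * (ell w')⁻¹ = 1/2 := by
        rw [hβ, div_mul_eq_mul_div, mul_inv_cancel₀ (ne_of_gt hlw)]
      rw [h1, h2, ← smul_add, hsum, smul_smul]
      norm_num
    have hhu'' : hfun e ≤ hfun u'' := hemin u'' hu''B
    have hhw'' : hfun e ≤ hfun w'' := hemin w'' hw''B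
    have hcomboh : α * hfun u'' + β * hfun w'' = hfun e := by
      have h1 : hfun (α • u'' + β • w'') = α * hfun u'' + β * hfun w'' := by
        rw [hh_add, hh_smul α u'', hh_smul β w'']
      rw [hcombo] at h1
      linarith
    have key : α * (hfun u'' - hfun e) + β * (hfun w'' - hfun e) = 0 := by
      linear_combination hcomboh - hfun e * hαβ
    have ht1 : 0 ≤ α * (hfun u'' - hfun e) := mul_nonneg hαpos.le (by linarith)
    have ht2 : 0 ≤ β * (hfun w'' - hfun e) := mul_nonneg hβpos.le (by linarith)
    have hz1 : α * (hfun u'' - hfun e) = 0 := by linarith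
    have hz2 : β * (hfun w'' - hfun e) = 0 := by linarith
    have hhequ : hfun u'' = hfun e := by
      rcases mul_eq_zero.1 hz1 with h | h
      · exact absurd h (ne_of_gt hαpos)
      · linarith
    have hheqw : hfun w'' = hfun e := by
      rcases mul_eq_zero.1 hz2 with h | h
      · exact absurd h (ne_of_gt hβpos)
      · linarith
    have hu''B₁ : u'' ∈ B₁ := by
      refine ⟨hu''B, ?_⟩
      show hfun u'' = hfun e₁
      rw [hhequ]
      exact heB₁.2
    have hw''B₁ : w'' ∈ B₁ := by
      refine ⟨hw''B, ?_⟩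
      show hfun w'' = hfun e₁
      rw [hheqw]
      exact heB₁.2
    have hQu : QP u'' ≤ QP e := heQmax hu''B₁
    have hQw : QP w'' ≤ QP e := heQmax hw''B₁
    have hiden : QP e = α * QP u'' + β * QP w'' - α*β*QP (u'' - w'') := by
      rw [← hcombo]
      exact QP_combo hαβ u'' w''
    have h5 : (α+β)*QP e = QP e := by rw [hαβ]; ring
    have hQle : QP (u'' - w'') ≤ 0 := by
      have h1 : α * QP u'' ≤ α * QP e := mul_le_mul_of_nonneg_left hQu hαpos.le
      have h2 : β * QP w'' ≤ β * QP e := mul_le_mul_of_nonneg_left hQw hβpos.le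
      have h6 := mul_pos hαpos hβpos
      have h7 : α*β*QP (u'' - w'') ≤ 0 := by linarith
      by_contra hpos
      push_neg at hpos
      nlinarith
    have huw : u'' = w'' := by
      by_contra hne
      have h7 : u'' - w'' ≠ 0 := sub_ne_zero.2 hne
      linarith [QP_pos h7]
    have hwe : w'' = e := by
      rw [← hcombo, huw, ← add_smul, hαβ, one_smul]
    refine ⟨ell u', ?_⟩
    have h8 : u' = ell u' • u'' := by
      rw [hu'', smul_smul, mul_inv_cancel₀ (ne_of_gt hlu), one_smul]
    calc u' = ell u' • u'' := h8
      _ = ell u' • e := by rw [huw, hwe]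
  -- the minimum over the vertices is attained
  have hattain : ∃ w ∈ P.verts, dotR e.1 (toR w) = e.2 := by
    by_contra hcon
    push_neg at hcon
    have hslack : ∀ w ∈ P.verts, e.2 < dotR e.1 (toR w) := fun w hw =>
      lt_of_le_of_ne (heC w hw) (fun h => hcon w hw h.symm)
    set img := P.verts.image (fun w => dotR e.1 (toR w) - e.2) with himg
    have himgne : img.Nonempty := P.nonem.image _
    set δ := img.min' himgne with hδ
    have hδpos : 0 < δ := by
      obtain ⟨w, hw, hweq⟩ := Finset.mem_image.1 (img.min'_mem himgne)
      rw [hδ, ← hweq]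
      have := hslack w hw
      linarith
    have hδle : ∀ w ∈ P.verts, δ ≤ dotR e.1 (toR w) - e.2 := fun w hw =>
      img.min'_le _ (Finset.mem_image_of_mem _ hw)
    have huC2 : ((e.1, e.2 + δ) : (Fin n → ℝ) × ℝ) ∈ C := by
      intro w hw
      show e.2 + δ ≤ dotR e.1 (toR w)
      have := hδle w hw
      linarith
    have hwC2 : ((e.1, e.2 - δ) : (Fin n → ℝ) × ℝ) ∈ C := by
      intro w hw
      show e.2 - δ ≤ dotR e.1 (toR w)
      have := heC w hw
      linarith
    have hsum2 : ((e.1, e.2 + δ) : (Fin n → ℝ) × ℝ) + (e.1, e.2 - δ) = (2:ℝ) • e := by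
      refine Prod.ext ?_ ?_
      · show e.1 + e.1 = (2:ℝ) • e.1
        rw [two_smul]
      · show (e.2 + δ) + (e.2 - δ) = (2:ℝ) • e.2
        rw [smul_eq_mul]
        ring
    obtain ⟨μ, hμ⟩ := hext _ _ huC2 hwC2 hsum2
    have h1 : e.1 = μ • e.1 := congrArg Prod.fst hμ
    have h2 : e.2 + δ = μ * e.2 := congrArg Prod.snd hμ
    obtain ⟨i, hi⟩ : ∃ i, e.1 i ≠ 0 := by
      by_contra hc
      push_neg at hc
      exact he1ne (funext hc)
    have hμ1 : μ = 1 := by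
      have h3 := congrFun h1 i
      have h4 : e.1 i = μ * e.1 i := h3
      have h5 : (μ - 1) * e.1 i = 0 := by linarith
      rcases mul_eq_zero.1 h5 with h | h
      · linarith
      · exact absurd h hi
    rw [hμ1, one_mul] at h2
    linarith
  -- the span of the minimal face directions
  set Vm : Finset (Fin n → ℤ) := P.verts.filter (fun w => dotR e.1 (toR w) = e.2) with hVm
  obtain ⟨v₀, hv₀Vm⟩ : ∃ v₀, v₀ ∈ Vm := by
    obtain ⟨w, hw, hwe⟩ := hattain
    exact ⟨w, by rw [hVm, Finset.mem_filter]; exact ⟨hw, hwe⟩⟩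
  have hv₀verts : v₀ ∈ P.verts := (Finset.mem_filter.1 hv₀Vm).1
  have hv₀min : dotR e.1 (toR v₀) = e.2 := (Finset.mem_filter.1 hv₀Vm).2
  set Z : Finset (Fin n → ℤ) := Vm.image (fun w => w - v₀) with hZ
  set S : Submodule ℝ (Fin n → ℝ) := Submodule.span ℝ (toR '' (Z : Set (Fin n → ℤ))) with hS
  have hZmem : ∀ w ∈ Vm, toR w - toR v₀ ∈ toR '' (Z : Set (Fin n → ℤ)) := by
    intro w hw
    refine ⟨w - v₀, ?_, toR_sub w v₀⟩
    exact Finset.mem_coe.2 (Finset.mem_image_of_mem _ hw)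
  have hZdot : ∀ w ∈ Vm, dotR e.1 (toR w) = e.2 := fun w hw => (Finset.mem_filter.1 hw).2
  have hSker : S ≤ LinearMap.ker (dotL e.1) := by
    rw [hS, Submodule.span_le]
    rintro x ⟨z, hz, rfl⟩
    have hzZ := Finset.mem_coe.1 hz
    rw [hZ, Finset.mem_image] at hzZ
    obtain ⟨w, hw, rfl⟩ := hzZ
    simp only [SetLike.mem_coe, LinearMap.mem_ker]
    show dotR e.1 (toR (w - v₀)) = 0
    rw [toR_sub, dotR_sub, hZdot w hw, hv₀min, sub_self]
  have hka : Module.finrank ℝ (LinearMap.ker (dotL e.1)) + 1 = n := finrank_ker_dotL he1ne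
  have hSle : Module.finrank ℝ S + 1 ≤ n := by
    have := Submodule.finrank_mono hSker
    omega
  have hSge : ¬ (Module.finrank ℝ S + 2 ≤ n) := by
    intro hcd
    obtain ⟨g, hgann, hgns⟩ := exists_ann_not_span S e.1 he1ne hcd
    set c₀ := dotR g (toR v₀) with hc₀
    have hgVm : ∀ w ∈ Vm, dotR g (toR w) = c₀ := by
      intro w hw
      have hmem : toR w - toR v₀ ∈ S := Submodule.subset_span (hZmem w hw)
      have h1 := hgann _ hmem
      rw [dotR_sub] at h1
      rw [hc₀]
      linarith
    set Vc := P.verts.filter (fun w => ¬ (dotR e.1 (toR w) = e.2)) with hVc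
    set tset := insert (1:ℝ)
      (Vc.image (fun w => (dotR e.1 (toR w) - e.2) / (|dotR g (toR w) - c₀| + 1))) with htset
    have htsetne : tset.Nonempty := Finset.insert_nonempty _ _
    set t := tset.min' htsetne with ht
    have hVcslack : ∀ w ∈ Vc, 0 < dotR e.1 (toR w) - e.2 := by
      intro w hw
      obtain ⟨hw1, hw2⟩ := Finset.mem_filter.1 hw
      have := heC w hw1
      rcases lt_or_eq_of_le this with h | h
      · linarith
      · exact absurd h.symm hw2
    have htpos : 0 < t := by
      have hall : ∀ x ∈ tset, (0:ℝ) < x := by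
        intro x hx
        rw [htset] at hx
        rcases Finset.mem_insert.1 hx with h | h
        · rw [h]; norm_num
        · obtain ⟨w, hw, hweq⟩ := Finset.mem_image.1 h
          rw [← hweq]
          have h1 := hVcslack w hw
          positivity
      exact hall _ (tset.min'_mem htsetne)
    have ht_le : ∀ w ∈ Vc, t * |dotR g (toR w) - c₀| ≤ dotR e.1 (toR w) - e.2 := by
      intro w hw
      have h1 : t ≤ (dotR e.1 (toR w) - e.2) / (|dotR g (toR w) - c₀| + 1) := by
        apply tset.min'_le
        rw [htset]
        exact Finset.mem_insert_of_mem (Finset.mem_image_of_mem _ hw)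
      have h2 : (0:ℝ) < |dotR g (toR w) - c₀| + 1 := by positivity
      have h3 : t * (|dotR g (toR w) - c₀| + 1) ≤ dotR e.1 (toR w) - e.2 := by
        rw [← le_div_iff₀ h2]  -- t * D ≤ s ↔ t ≤ s / D
        exact h1
      nlinarith [abs_nonneg (dotR g (toR w) - c₀), htpos]
    have hmemC : ∀ s : ℝ, |s| ≤ t → e + s • ((g, c₀) : (Fin n → ℝ) × ℝ) ∈ C := by
      intro s hs w hw
      show e.2 + s * c₀ ≤ dotR (e.1 + s • g) (toR w)
      rw [dotR_add_left, dotR_smul_left]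
      by_cases hwVm : dotR e.1 (toR w) = e.2
      · have hwVm' : w ∈ Vm := Finset.mem_filter.2 ⟨hw, hwVm⟩
        rw [hwVm, hgVm w hwVm']
      · have hwVc : w ∈ Vc := Finset.mem_filter.2 ⟨hw, hwVm⟩
        have h1 := ht_le w hwVc
        have h2 : |s * (dotR g (toR w) - c₀)| ≤ t * |dotR g (toR w) - c₀| := by
          rw [abs_mul]
          exact mul_le_mul_of_nonneg_right hs (abs_nonneg _)
        have h3 := neg_abs_le (s * (dotR g (toR w) - c₀))
        nlinarith
    have hu'C : e + t • ((g, c₀) : (Fin n → ℝ) × ℝ) ∈ C :=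
      hmemC t (by rw [abs_of_pos htpos])
    have hw'C : e + (-t) • ((g, c₀) : (Fin n → ℝ) × ℝ) ∈ C :=
      hmemC (-t) (by rw [abs_neg, abs_of_pos htpos])
    have hsum2 : (e + t • ((g, c₀) : (Fin n → ℝ) × ℝ))
        + (e + (-t) • ((g, c₀) : (Fin n → ℝ) × ℝ)) = (2:ℝ) • e := by
      rw [neg_smul]
      rw [two_smul]
      abel
    obtain ⟨μ, hμ⟩ := hext _ _ hu'C hw'C hsum2
    have h1 : e.1 + t • g = μ • e.1 := congrArg Prod.fst hμ
    apply hgns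
    rw [Submodule.mem_span_singleton]
    refine ⟨(μ - 1)/t, ?_⟩
    have h2 : t • g = (μ - 1) • e.1 := by
      have : t • g = μ • e.1 - e.1 := by
        rw [← h1]; abel
      rw [this, sub_smul, one_smul]
    have h3 : g = t⁻¹ • ((μ - 1) • e.1) := by
      rw [← h2, smul_smul, inv_mul_cancel₀ (ne_of_gt htpos), one_smul]
    rw [h3, smul_smul, div_eq_mul_inv]
    ring_nf
  have hSd : Module.finrank ℝ S + 1 = n := by omega
  -- integral annihilator and primitive normal
  have hSnetop : Submodule.span ℝ (toR '' (Z : Set (Fin n → ℤ))) ≠ ⊤ := by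
    intro htop
    have h1 : Module.finrank ℝ S = n := by
      rw [hS, htop, finrank_top]
      simp [Module.finrank_pi]
    omega
  obtain ⟨q', hq'ne, hq'ann⟩ := rat_ann Z hSnetop
  have hq'S : ∀ x ∈ S, dotR (toR q') x = 0 := by
    intro x hx
    have hle : S ≤ LinearMap.ker (dotL (toR q')) := by
      rw [hS, Submodule.span_le]
      rintro x' ⟨z, hz, rfl⟩
      have hzZ : z ∈ Z := Finset.mem_coe.1 hz
      simp only [SetLike.mem_coe, LinearMap.mem_ker]
      show dotR (toR q') (toR z) = 0
      rw [dotR_toR]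
      rw [show intDotHom q' z = ∑ i, q' i * z i from rfl, hq'ann z hzZ]
      norm_num
    exact hle hx
  have hkerS : LinearMap.ker (dotL e.1) = S := by
    symm
    apply Submodule.eq_of_le_of_finrank_le hSker
    omega
  have hkerle : LinearMap.ker (dotL e.1) ≤ LinearMap.ker (dotL (toR q')) := by
    rw [hkerS]
    intro x hx
    simp only [LinearMap.mem_ker]
    exact hq'S x hx
  obtain ⟨lam, hlam⟩ := exists_ratio he1ne hkerle
  have htoRq'ne : toR q' ≠ 0 := by
    intro h
    apply hq'ne
    funext i
    have : (q' i : ℝ) = 0 := by rw [← show toR q' i = (q' i : ℝ) from rfl, h]; rfl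
    exact_mod_cast this
  have hlamne : lam ≠ 0 := by
    intro h0
    rw [h0] at hlam
    have h1 := hlam (toR q')
    simp only [zero_mul] at h1
    exact absurd h1 (ne_of_gt (dotR_self_pos htoRq'ne))
  obtain ⟨A, c, hcpos, hAc, hAsurj⟩ := exists_primitive q' hq'ne
  have hA : ∀ x, dotR (toR A) x = (c * lam) * dotR e.1 x := by
    intro x
    have h1 : dotR (toR A) x = c * dotR (toR q') x := by
      unfold dotR
      rw [Finset.mul_sum]
      refine Finset.sum_congr rfl fun i _ => ?_
      rw [show toR A i = (A i : ℝ) from rfl, hAc i]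
      show c * (q' i : ℝ) * x i = c * (toR q' i * x i)
      rw [show toR q' i = (q' i : ℝ) from rfl]; ring
    rw [h1, hlam x]; ring
  -- build the facet from a positively-oriented primitive normal
  have build : ∀ (A' : Fin n → ℤ) (lamP : ℝ), 0 < lamP →
      (∀ x, dotR (toR A') x = lamP * dotR e.1 x) → Function.Surjective (intDotHom A') →
      ∃ G : P.Facet, formR G.form y < (G.b : ℝ) := by
    intro A' lamP hP hrel hsurjA
    have hformRA : ∀ x, formR (intDotHom A') x = dotR (toR A') x := by
      intro x
      rw [formR_eq_dotR, coeffs_intDotHom]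
    set bI : ℤ := intDotHom A' v₀ with hbI
    have hbR : (bI : ℝ) = lamP * e.2 := by
      have h1 : (bI:ℝ) = dotR (toR A') (toR v₀) := by rw [hbI, dotR_toR]
      rw [h1, hrel, hv₀min]
    have hvertge : ∀ w ∈ P.verts, (bI:ℝ) ≤ dotR (coeffs (intDotHom A')) (toR w) := by
      intro w hw
      rw [coeffs_intDotHom, hrel (toR w), hbR]
      exact mul_le_mul_of_nonneg_left (heC w hw) hP.le
    have hminle : ∀ x ∈ P.carrier, (bI:ℝ) ≤ formR (intDotHom A') x := by
      intro x hx
      rw [hformRA, ← coeffs_intDotHom]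
      exact le_on_carrier hvertge x hx
    have hv₀car : toR v₀ ∈ P.carrier := vert_mem_carrier P hv₀verts
    have hv₀val : formR (intDotHom A') (toR v₀) = (bI:ℝ) := by
      rw [hformRA, dotR_toR]
    have hmemGset : ∀ w ∈ Vm,
        toR w ∈ {x ∈ P.carrier | formR (intDotHom A') x = (bI:ℝ)} := by
      intro w hw
      refine ⟨vert_mem_carrier P (Finset.mem_filter.1 hw).1, ?_⟩
      rw [hformRA, hrel, hZdot w hw, ← hbR]
    have hsub1 : S ≤ vectorSpan ℝ {x ∈ P.carrier | formR (intDotHom A') x = (bI:ℝ)} := by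
      rw [hS, Submodule.span_le]
      rintro x ⟨z, hz, rfl⟩
      have hzZ : z ∈ Z := Finset.mem_coe.1 hz
      rw [hZ, Finset.mem_image] at hzZ
      obtain ⟨w, hw, rfl⟩ := hzZ
      rw [toR_sub]
      exact SetLike.mem_coe.2 (vsub_mem_vectorSpan ℝ (hmemGset w hw) (hmemGset v₀ hv₀Vm))
    have hsub2 : vectorSpan ℝ {x ∈ P.carrier | formR (intDotHom A') x = (bI:ℝ)} ≤ S := by
      have hker : vectorSpan ℝ {x ∈ P.carrier | formR (intDotHom A') x = (bI:ℝ)}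
          ≤ LinearMap.ker (dotL (toR A')) := by
        apply vectorSpan_le_ker (b := (bI:ℝ))
        intro x hx
        rw [← hformRA]
        exact hx.2
      intro x hx
      have h1 := hker hx
      rw [LinearMap.mem_ker] at h1
      have h2 : dotR (toR A') x = 0 := h1
      rw [hrel] at h2
      have h3 : dotR e.1 x = 0 := by
        rcases mul_eq_zero.1 h2 with h | h
        · exact absurd h (ne_of_gt hP)
        · exact h
      have h4 : x ∈ LinearMap.ker (dotL e.1) := by
        rw [LinearMap.mem_ker]
        exact h3
      rw [hkerS] at h4
      exact h4
    have hdimG : Module.finrank ℝ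
        (vectorSpan ℝ {x ∈ P.carrier | formR (intDotHom A') x = (bI:ℝ)}) + 1 = n := by
      have heq : vectorSpan ℝ {x ∈ P.carrier | formR (intDotHom A') x = (bI:ℝ)} = S :=
        le_antisymm hsub2 hsub1
      rw [heq]
      exact hSd
    refine ⟨⟨intDotHom A', hsurjA, bI, hminle, ⟨toR v₀, hv₀car, hv₀val⟩, hdimG⟩, ?_⟩
    show formR (intDotHom A') y < (bI:ℝ)
    rw [hformRA, hrel, hbR]
    have h9 : dotR e.1 y - e.2 < 0 := heneg
    have h10 : dotR e.1 y < e.2 := by linarith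
    exact mul_lt_mul_of_pos_left h10 hP
  rcases lt_trichotomy (c * lam) 0 with hneg | hzero | hpos
  · refine build (-A) (-(c * lam)) (by linarith) ?_ ?_
    · intro x
      have h1 : toR (-A) = -toR A := by funext i; simp [toR]
      rw [h1, dotR_neg_left, hA x]; ring
    · intro k
      obtain ⟨z, hz⟩ := hAsurj (-k)
      exact ⟨z, by rw [intDotHom_neg, hz]; ring⟩
  · exact absurd hzero (mul_ne_zero (ne_of_gt hcpos) hlamne)
  · exact build A (c * lam) hpos hA hAsurj


/-! ### assembling the main theorem -/

lemma base_to_cond {P : LatticePolytope n} (hfd : P.IsFullDim) (hgen : P.AffGen)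
    {v : Fin n → ℤ} {F : P.Facet} (hbf : P.IsBaseFacet v F) :
    F.form v = -1 ∧ ∀ G : P.Facet, G ≠ F → 0 ≤ G.form v :=
  ⟨base_facet_form_v hgen hbf, fun G hG => other_facet_nonneg hfd hbf G hG⟩

lemma cond_to_base {P : LatticePolytope n} (hfd : P.IsFullDim)
    {v : Fin n → ℤ} (hv : v ≠ 0) {F : P.Facet}
    (hcond : F.form v = -1 ∧ ∀ G : P.Facet, G ≠ F → 0 ≤ G.form v) :
    P.IsBaseFacet v F := by
  refine ⟨hv, ?_⟩
  intro x hx hxoff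
  by_contra hnot
  obtain ⟨G, hGviol⟩ := hrep hfd hnot
  have hval : formR G.form (toR (x+v)) = ((G.form x + G.form v : ℤ) : ℝ) := by
    rw [formR_toR, map_add]
  rw [hval] at hGviol
  have hviolZ : G.form x + G.form v < G.b := by exact_mod_cast hGviol
  by_cases hGF : G = F
  · subst hGF
    have h1 := off_fset G hx hxoff
    have h2 := hcond.1
    omega
  · have h1 := hcond.2 G hGF
    have h2 := facet_min_le_lattice G hx
    omega

lemma cond_unique {P : LatticePolytope n} {v : Fin n → ℤ} {F F' : P.Facet}
    (h1 : F.form v = -1 ∧ ∀ G : P.Facet, G ≠ F → 0 ≤ G.form v)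
    (h2 : F'.form v = -1 ∧ ∀ G : P.Facet, G ≠ F' → 0 ≤ G.form v) : F = F' := by
  by_contra hne
  have h3 := h1.2 F' (fun h => hne h.symm)
  have h4 := h2.1
  omega

end CVaux

/-- A nonzero `v ∈ ℤⁿ` is a column vector of `P` iff there is a facet `F` with
`⟨F,v⟩ = -1` and `⟨G,v⟩ ≥ 0` for all facets `G ≠ F`; such a facet is unique and
equals the base facet `P_v`. -/
theorem statement0 {n : ℕ} (P : LatticePolytope n) (hfd : P.IsFullDim)
    (hgen : P.AffGen) (v : Fin n → ℤ) (hv : v ≠ 0) :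
    (P.IsColVec v ↔
      ∃ F : P.Facet, F.form v = -1 ∧ ∀ G : P.Facet, G ≠ F → 0 ≤ G.form v) ∧
    (∀ F F' : P.Facet,
      (F.form v = -1 ∧ ∀ G : P.Facet, G ≠ F → 0 ≤ G.form v) →
      (F'.form v = -1 ∧ ∀ G : P.Facet, G ≠ F' → 0 ≤ G.form v) → F = F') ∧
    (∀ F : P.Facet, (F.form v = -1 ∧ ∀ G : P.Facet, G ≠ F → 0 ≤ G.form v) →
      P.IsBaseFacet v F ∧ ∀ F' : P.Facet, P.IsBaseFacet v F' → F' = F) := by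
  refine ⟨⟨?_, ?_⟩, ?_, ?_⟩
  · rintro ⟨F, hbf⟩
    exact ⟨F, CVaux.base_to_cond hfd hgen hbf⟩
  · rintro ⟨F, hcond⟩
    exact ⟨F, CVaux.cond_to_base hfd hv hcond⟩
  · intro F F' h1 h2
    exact CVaux.cond_unique h1 h2
  · intro F hcond
    refine ⟨CVaux.cond_to_base hfd hv hcond, ?_⟩
    intro F' hbf'
    exact CVaux.cond_unique (CVaux.base_to_cond hfd hgen hbf') hcond
end
end

section
/- Let P be a full-dimensional lattice polytope whose lattice points affinely generate ℤ^n, and let u, v ∈ Col(P). Then: (a) the product uv exists if and only if u + v ≠ 0 and ⟨P_v, u⟩ > 0; (b) uv exists if and only if u + v ∈ Col(P) and P_{u+v} = P_u; (c) if uv exists, then P_{uv} = P_u and ⟨P_u, v⟩ = 0. -/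
open Set

noncomputable section

namespace ColHelpers

open LatticePolytope

variable {n : ℕ}

/-- The linear map corresponding to an additive form. -/
def fL (φ : (Fin n → ℤ) →+ ℤ) : (Fin n → ℝ) →ₗ[ℝ] ℝ where
  toFun x := ∑ i, x i * (φ (Pi.single i 1) : ℝ)
  map_add' x y := by simp [add_mul, Finset.sum_add_distrib]
  map_smul' a x := by simp [Finset.mul_sum, mul_assoc]

lemma fL_apply (φ : (Fin n → ℤ) →+ ℤ) (x : Fin n → ℝ) :
    fL φ x = ∑ i, x i * (φ (Pi.single i 1) : ℝ) := rfl

lemma formR_eq_fL (φ : (Fin n → ℤ) →+ ℤ) (x : Fin n → ℝ) : formR φ x = fL φ x := rfl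

lemma form_decomp (φ : (Fin n → ℤ) →+ ℤ) (z : Fin n → ℤ) :
    φ z = ∑ i, z i * φ (Pi.single i 1) := by
  conv_lhs => rw [← Finset.univ_sum_single z]
  rw [map_sum]
  refine Finset.sum_congr rfl fun i _ => ?_
  have : Pi.single i (z i) = (z i • Pi.single i (1:ℤ) : Fin n → ℤ) := by
    rw [← Pi.single_smul]; norm_num
  rw [this, map_zsmul, smul_eq_mul]

lemma formR_toR (φ : (Fin n → ℤ) →+ ℤ) (z : Fin n → ℤ) :
    formR φ (toR z) = (φ z : ℝ) := by
  rw [form_decomp φ z]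
  push_cast
  rfl

variable (P : LatticePolytope n)

lemma vert_mem_carrier {z : Fin n → ℤ} (hz : z ∈ P.verts) : toR z ∈ P.carrier :=
  subset_convexHull ℝ _ (by simpa using Finset.mem_image_of_mem toR hz)

lemma vert_mem_lattice {z : Fin n → ℤ} (hz : z ∈ P.verts) : z ∈ P.latticePoints :=
  vert_mem_carrier P hz

lemma lattice_nonempty : P.latticePoints.Nonempty :=
  ⟨P.nonem.choose, vert_mem_lattice P P.nonem.choose_spec⟩

/-- Half-space bound: a linear inequality valid on the vertices is valid on the carrier. -/
lemma carrier_le (f : (Fin n → ℝ) →ₗ[ℝ] ℝ) (r : ℝ)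
    (h : ∀ z ∈ P.verts, f (toR z) ≤ r) : ∀ x ∈ P.carrier, f x ≤ r := by
  intro x hx
  have hsub : P.carrier ⊆ {x | f x ≤ r} := by
    apply convexHull_min _ (convex_halfSpace_le f.isLinear r)
    intro y hy
    simp only [Finset.coe_image, Set.mem_image, Finset.mem_coe] at hy
    obtain ⟨z, hz, rfl⟩ := hy
    exact h z hz
  exact hsub hx

lemma carrier_ge (f : (Fin n → ℝ) →ₗ[ℝ] ℝ) (r : ℝ)
    (h : ∀ z ∈ P.verts, r ≤ f (toR z)) : ∀ x ∈ P.carrier, r ≤ f x := by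
  intro x hx
  have := carrier_le P (-f) (-r) (fun z hz => by simpa using neg_le_neg (h z hz)) x hx
  simpa using this

variable {P}

/-- Lattice points lie at nonnegative height. -/
lemma b_le_form (F : P.Facet) {z : Fin n → ℤ} (hz : z ∈ P.latticePoints) :
    F.b ≤ F.form z := by
  have := F.min_le (toR z) hz
  rw [formR_toR] at this
  exact_mod_cast this

lemma mem_facet_iff (F : P.Facet) (z : Fin n → ℤ) :
    toR z ∈ F.set ↔ z ∈ P.latticePoints ∧ F.form z = F.b := by
  unfold Facet.set
  rw [Set.mem_setOf_eq, formR_toR]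
  exact and_congr Iff.rfl (by exact_mod_cast Iff.rfl)

lemma not_mem_facet {F : P.Facet} {z : Fin n → ℤ} (hz : z ∈ P.latticePoints)
    (h : F.form z ≠ F.b) : toR z ∉ F.set := by
  rw [mem_facet_iff]; tauto

/-- Column vector step. -/
lemma col_step {v : Fin n → ℤ} {F : P.Facet} (hv : P.IsBaseFacet v F)
    {z : Fin n → ℤ} (hz : z ∈ P.latticePoints) (h : F.form z ≠ F.b) :
    z + v ∈ P.latticePoints :=
  hv.2 z hz (not_mem_facet hz h)


/-- There is a lattice point off any given facet (uses full-dimensionality). -/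
lemma exists_pos_height (hfd : P.IsFullDim) (F : P.Facet) :
    ∃ z ∈ P.latticePoints, F.b < F.form z := by
  by_contra hcon
  push_neg at hcon
  have hall : ∀ z ∈ P.latticePoints, F.form z = F.b :=
    fun z hz => le_antisymm (hcon z hz) (b_le_form F hz)
  -- the carrier lies in the hyperplane
  have hcar : ∀ x ∈ P.carrier, fL F.form x = (F.b : ℝ) := by
    intro x hx
    refine le_antisymm (carrier_le P (fL F.form) _ ?_ x hx) ?_
    · intro z hz
      rw [← formR_eq_fL, formR_toR, hall z (vert_mem_lattice P hz)]
    · have := F.min_le x hx; rwa [formR_eq_fL] at this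
  -- a coordinate where the form is nonzero
  obtain ⟨z₁, hz₁⟩ := F.surj 1
  have hne : ∃ i, (F.form (Pi.single i 1) : ℝ) ≠ 0 := by
    by_contra hzero
    push_neg at hzero
    have : fL F.form (toR z₁) = 0 := by
      rw [fL_apply]
      exact Finset.sum_eq_zero fun i _ => by rw [hzero i, mul_zero]
    rw [← formR_eq_fL, formR_toR, hz₁] at this
    norm_num at this
  obtain ⟨i, hi⟩ := hne
  obtain ⟨y, hy⟩ := hfd
  rw [mem_interior_iff_mem_nhds] at hy
  obtain ⟨ε, hε, hball⟩ := Metric.mem_nhds_iff.mp hy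
  set w : Fin n → ℝ := Pi.single i (ε / 2) with hw
  have hwmem : y + w ∈ P.carrier := by
    apply hball
    have hd : dist (y + w) y = ‖w‖ := by simp [dist_eq_norm]
    rw [Metric.mem_ball, hd]
    have : ‖w‖ ≤ ε / 2 := by
      rw [pi_norm_le_iff_of_nonneg (by linarith)]
      intro j
      rcases eq_or_ne j i with rfl | hj
      · rw [hw]
        simp only [Pi.single_eq_same, Real.norm_eq_abs]
        rw [abs_of_pos (by linarith : (0:ℝ) < ε / 2)]
      · simp [hw, Pi.single_eq_of_ne hj]; linarith
    linarith
  have hymem : y ∈ P.carrier := hball (Metric.mem_ball_self hε)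
  have h1 := hcar _ hwmem
  have h2 := hcar _ hymem
  rw [map_add, h2] at h1
  have h3 : fL F.form w = 0 := by linarith
  have h4 : fL F.form w = (ε / 2) * (F.form (Pi.single i 1) : ℝ) := by
    rw [fL_apply, Finset.sum_eq_single i]
    · simp [hw]
    · intro j _ hj; simp [hw, Pi.single_eq_of_ne hj]
    · simp
  rw [h4] at h3
  rcases mul_eq_zero.mp h3 with h | h
  · linarith
  · exact hi h

/-- There is a lattice point on any facet. -/
lemma exists_lattice_on_facet (F : P.Facet) :
    ∃ z ∈ P.latticePoints, F.form z = F.b := by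
  by_contra hcon
  push_neg at hcon
  have hall : ∀ z ∈ P.latticePoints, F.b + 1 ≤ F.form z := by
    intro z hz
    have h1 := b_le_form F hz
    have h2 := hcon z hz
    omega
  obtain ⟨x, hx, hxf⟩ := F.attained
  have := carrier_ge P (fL F.form) ((F.b : ℝ) + 1) ?_ x hx
  · rw [← formR_eq_fL, hxf] at this; linarith
  · intro z hz
    rw [← formR_eq_fL, formR_toR]
    have := hall z (vert_mem_lattice P hz)
    exact_mod_cast this

variable (P) in
/-- The "dot product with `v`" form. -/
def psi (v : Fin n → ℤ) : (Fin n → ℤ) →+ ℤ where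
  toFun z := ∑ i, z i * v i
  map_zero' := by simp
  map_add' x y := by simp [add_mul, Finset.sum_add_distrib]

lemma psi_single (v : Fin n → ℤ) (i : Fin n) : psi v (Pi.single i 1) = v i := by
  show ∑ j, (Pi.single i 1 : Fin n → ℤ) j * v j = v i
  rw [Finset.sum_eq_single i]
  · simp
  · intro j _ hj; simp [Pi.single_eq_of_ne hj]
  · simp

lemma psi_bounded (v : Fin n → ℤ) :
    ∃ M : ℤ, ∀ z ∈ P.latticePoints, psi v z ≤ M := by
  refine ⟨(P.verts.image (psi v)).max' (P.nonem.image _), fun z hz => ?_⟩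
  set M := (P.verts.image (psi v)).max' (P.nonem.image _) with hM
  have hv : ∀ z' ∈ P.verts, fL (psi v) (toR z') ≤ (M : ℝ) := by
    intro z' hz'
    rw [← formR_eq_fL, formR_toR]
    exact_mod_cast Finset.le_max' _ _ (Finset.mem_image_of_mem (psi v) hz')
  have := carrier_le P (fL (psi v)) (M : ℝ) hv (toR z) hz
  rw [← formR_eq_fL, formR_toR] at this
  exact_mod_cast this

lemma psi_self_pos {v : Fin n → ℤ} (hv : v ≠ 0) : 1 ≤ psi v v := by
  obtain ⟨i, hi⟩ := Function.ne_iff.mp hv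
  have hi' : v i ≠ 0 := hi
  have h1 : 1 ≤ v i * v i := by rcases lt_or_gt_of_ne hi' with h | h <;> nlinarith
  calc (1:ℤ) ≤ v i * v i := h1
  _ ≤ ∑ j, v j * v j :=
    Finset.single_le_sum (fun j _ => mul_self_nonneg (v j)) (Finset.mem_univ i)

/-- A column vector has negative height over its base facet. -/
lemma form_neg (hfd : P.IsFullDim) {v : Fin n → ℤ} {F : P.Facet}
    (hv : P.IsBaseFacet v F) : F.form v < 0 := by
  by_contra hcon
  push_neg at hcon
  obtain ⟨z₀, hz₀, hz₀h⟩ := exists_pos_height hfd F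
  have hchain : ∀ k : ℕ, z₀ + k • v ∈ P.latticePoints ∧ F.b < F.form (z₀ + k • v) := by
    intro k
    induction k with
    | zero => simpa using ⟨hz₀, hz₀h⟩
    | succ k ih =>
      have hstep : z₀ + (k+1) • v = (z₀ + k • v) + v := by
        rw [succ_nsmul, add_assoc]
      constructor
      · rw [hstep]
        exact col_step hv ih.1 (by omega)
      · rw [hstep, map_add]
        have := ih.2
        have hk : 0 ≤ F.form v := hcon
        omega
  obtain ⟨M, hMb⟩ := psi_bounded (P := P) v
  have hval : ∀ k : ℕ, psi v z₀ + k ≤ M := by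
    intro k
    have h1 := hMb _ (hchain k).1
    have h2 : psi v (z₀ + k • v) = psi v z₀ + k * psi v v := by
      rw [map_add, map_nsmul]
      simp [nsmul_eq_mul]
    have h3 : (k : ℤ) ≤ k * psi v v := by
      have := psi_self_pos hv.1
      nlinarith [Int.ofNat_nonneg k]
    omega
  have h5 := hval ((M - psi v z₀).toNat + 1)
  have h6 : M - psi v z₀ ≤ ((M - psi v z₀).toNat : ℤ) := Int.self_le_toNat _
  push_cast at h5
  omega

/-- A column vector has height exactly `-1` over its base facet. -/
lemma form_eq_neg_one (hfd : P.IsFullDim) (hgen : P.AffGen) {v : Fin n → ℤ}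
    {F : P.Facet} (hv : P.IsBaseFacet v F) : F.form v = -1 := by
  set d : ℤ := -F.form v with hd
  have hd1 : 1 ≤ d := by have := form_neg hfd hv; omega
  have hdvd : ∀ N : ℕ, ∀ z ∈ P.latticePoints, F.form z - F.b ≤ N →
      d ∣ (F.form z - F.b) := by
    intro N
    induction N with
    | zero =>
      intro z hz hle
      have := b_le_form F hz
      have h0 : F.form z - F.b = 0 := by omega
      rw [h0]
      exact dvd_zero d
    | succ N ih =>
      intro z hz hle
      by_cases hN : F.form z - F.b ≤ N
      · exact ih z hz hN
      · have hpos : F.b < F.form z := by omega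
        have hzv : z + v ∈ P.latticePoints := col_step hv hz (by omega)
        have hform : F.form (z + v) = F.form z - d := by rw [map_add]; omega
        have hle' : F.form (z + v) - F.b ≤ N := by omega
        have h3 := ih _ hzv hle'
        have h2 : F.form (z + v) - F.b = F.form z - F.b - d := by omega
        rw [h2] at h3
        have h4 := dvd_add h3 (dvd_refl d)
        have h5 : F.form z - F.b - d + d = F.form z - F.b := by ring
        rwa [h5] at h4
  have hdvd' : ∀ z ∈ P.latticePoints, d ∣ (F.form z - F.b) := by
    intro z hz
    exact hdvd (F.form z - F.b).toNat z hz (Int.self_le_toNat _)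
  obtain ⟨x₀, hx₀⟩ := lattice_nonempty P
  have hgen' := hgen x₀ hx₀
  set T : AddSubgroup (Fin n → ℤ) :=
    AddSubgroup.comap F.form (AddSubgroup.zmultiples d) with hT
  have hST : AddSubgroup.closure {y | ∃ x ∈ P.latticePoints, y = x - x₀} ≤ T := by
    rw [AddSubgroup.closure_le]
    rintro y ⟨x, hx, rfl⟩
    show F.form (x - x₀) ∈ AddSubgroup.zmultiples d
    rw [Int.mem_zmultiples_iff, map_sub]
    have h1 := hdvd' x hx
    have h2 := hdvd' x₀ hx₀
    have h3 := dvd_sub h1 h2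
    have h4 : F.form x - F.b - (F.form x₀ - F.b) = F.form x - F.form x₀ := by ring
    rwa [h4] at h3
  rw [hgen'] at hST
  obtain ⟨z₁, hz₁⟩ := F.surj 1
  have hz₁T : z₁ ∈ T := hST (AddSubgroup.mem_top z₁)
  have : d ∣ 1 := by
    have := hz₁T
    rw [hT, AddSubgroup.mem_comap, Int.mem_zmultiples_iff, hz₁] at this
    exact this
  have := Int.le_of_dvd one_pos this
  omega

/-- There is a lattice point at height one over the base facet of a column vector. -/
lemma exists_height_one (hfd : P.IsFullDim) (hgen : P.AffGen) {v : Fin n → ℤ}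
    {F : P.Facet} (hv : P.IsBaseFacet v F) :
    ∃ z ∈ P.latticePoints, F.form z = F.b + 1 := by
  have hm1 := form_eq_neg_one hfd hgen hv
  have hdown : ∀ N : ℕ, ∀ z ∈ P.latticePoints, F.form z - F.b = N + 1 →
      ∃ z' ∈ P.latticePoints, F.form z' = F.b + 1 := by
    intro N
    induction N with
    | zero => intro z hz he; exact ⟨z, hz, by omega⟩
    | succ N ih =>
      intro z hz he
      have hzv : z + v ∈ P.latticePoints := col_step hv hz (by omega)
      refine ih _ hzv ?_
      rw [map_add]
      omega
  obtain ⟨z₀, hz₀, hz₀h⟩ := exists_pos_height hfd F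
  refine hdown (F.form z₀ - F.b - 1).toNat z₀ hz₀ ?_
  have : ((F.form z₀ - F.b - 1).toNat : ℤ) = F.form z₀ - F.b - 1 :=
    Int.toNat_of_nonneg (by omega)
  omega


lemma facet_set_eq (F : P.Facet) :
    F.set = {x ∈ P.carrier | formR F.form x = (F.b : ℝ)} := rfl

/-- If every lattice point on `F` lies on `G`, the two facets have the same data. -/
lemma form_eq_of_zero_sub (hfd : P.IsFullDim) (F G : P.Facet)
    (h : ∀ z ∈ P.latticePoints, F.form z = F.b → G.form z = G.b) :
    F.form = G.form ∧ F.b = G.b := by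
  classical
  -- the constant K
  set K : ℤ := (P.verts.image (fun z => G.form z - G.b)).max' (P.nonem.image _) with hK
  have hK0 : 0 ≤ K := by
    obtain ⟨z, hz⟩ := P.nonem
    have h1 : G.form z - G.b ≤ K :=
      Finset.le_max' _ _ (Finset.mem_image_of_mem (fun z => G.form z - G.b) hz)
    have h2 := b_le_form G (vert_mem_lattice P hz)
    omega
  have hvert : ∀ z ∈ P.verts, G.form z - G.b ≤ K * (F.form z - F.b) := by
    intro z hz
    by_cases hF : F.form z = F.b
    · have := h z (vert_mem_lattice P hz) hF
      rw [hF, this]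
      simp
    · have h1 : 1 ≤ F.form z - F.b := by
        have := b_le_form F (vert_mem_lattice P hz); omega
      have h2 : G.form z - G.b ≤ K :=
        Finset.le_max' _ _ (Finset.mem_image_of_mem (fun z => G.form z - G.b) hz)
      nlinarith
  -- the linear functional  g - K f
  set m : (Fin n → ℝ) →ₗ[ℝ] ℝ := fL G.form - (K : ℝ) • fL F.form with hm
  have hmcar : ∀ x ∈ P.carrier, m x ≤ (G.b : ℝ) - (K : ℝ) * (F.b : ℝ) := by
    apply carrier_le
    intro z hz
    have h1 := hvert z hz
    have h2 : m (toR z) = (G.form z : ℝ) - (K : ℝ) * (F.form z : ℝ) := by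
      rw [hm]
      simp only [LinearMap.sub_apply, LinearMap.smul_apply, smul_eq_mul]
      rw [← formR_eq_fL, ← formR_eq_fL, formR_toR, formR_toR]
    rw [h2]
    have : (G.form z : ℝ) - (G.b : ℝ) ≤ (K : ℝ) * ((F.form z : ℝ) - (F.b : ℝ)) := by
      exact_mod_cast h1
    linarith
  -- G is constant on F.set
  have hGconst : ∀ x ∈ F.set, fL G.form x = (G.b : ℝ) := by
    rintro x ⟨hx, hxf⟩
    rw [formR_eq_fL] at hxf
    have h1 := hmcar x hx
    rw [hm] at h1
    simp only [LinearMap.sub_apply, LinearMap.smul_apply, smul_eq_mul] at h1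
    rw [hxf] at h1
    have h2 := G.min_le x hx
    rw [formR_eq_fL] at h2
    linarith
  have hFconst : ∀ x ∈ F.set, fL F.form x = (F.b : ℝ) := by
    rintro x ⟨hx, hxf⟩
    rw [formR_eq_fL] at hxf
    exact hxf
  -- vector span of F.set
  set W : Submodule ℝ (Fin n → ℝ) := vectorSpan ℝ F.set with hW
  have hWF : W ≤ LinearMap.ker (fL F.form) := by
    rw [hW]
    apply Submodule.span_le.mpr
    rintro y hy
    obtain ⟨a, ha, b, hb, rfl⟩ := Set.mem_vsub.mp hy
    simp only [SetLike.mem_coe, LinearMap.mem_ker]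
    have hab : a -ᵥ b = a - b := rfl
    rw [hab, map_sub, hFconst a ha, hFconst b hb, sub_self]
  have hWG : W ≤ LinearMap.ker (fL G.form) := by
    rw [hW]
    apply Submodule.span_le.mpr
    rintro y hy
    obtain ⟨a, ha, b, hb, rfl⟩ := Set.mem_vsub.mp hy
    simp only [SetLike.mem_coe, LinearMap.mem_ker]
    have hab : a -ᵥ b = a - b := rfl
    rw [hab, map_sub, hGconst a ha, hGconst b hb, sub_self]
  have hdimW : Module.finrank ℝ W + 1 = n := F.dim
  -- the kernel of fL F.form has dimension n - 1
  obtain ⟨z₁, hz₁⟩ := F.surj 1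
  have hfsurj : Function.Surjective (fL F.form) := by
    intro r
    refine ⟨r • toR z₁, ?_⟩
    rw [map_smul, ← formR_eq_fL, formR_toR, hz₁]
    simp
  have hrange : LinearMap.range (fL F.form) = ⊤ := LinearMap.range_eq_top.mpr hfsurj
  have hker : Module.finrank ℝ (LinearMap.ker (fL F.form)) + 1 = n := by
    have h1 := LinearMap.finrank_range_add_finrank_ker (fL F.form)
    rw [hrange] at h1
    have h2 : Module.finrank ℝ (⊤ : Submodule ℝ ℝ) = 1 := by simp
    have h3 : Module.finrank ℝ (Fin n → ℝ) = n := by simp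
    omega
  have hWeq : W = LinearMap.ker (fL F.form) :=
    Submodule.eq_of_le_of_finrank_le hWF (by omega)
  have hkerle : LinearMap.ker (fL F.form) ≤ LinearMap.ker (fL G.form) := by
    rw [← hWeq]; exact hWG
  -- proportionality
  set c : ℤ := G.form z₁ with hc
  have hz₁R : fL F.form (toR z₁) = 1 := by
    rw [← formR_eq_fL, formR_toR, hz₁]; norm_num
  have hcR : fL G.form (toR z₁) = (c : ℝ) := by
    rw [← formR_eq_fL, formR_toR, hc]
  have hprop : ∀ x : Fin n → ℝ, fL G.form x = fL F.form x * (c : ℝ) := by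
    intro x
    have h1 : x - (fL F.form x) • toR z₁ ∈ LinearMap.ker (fL F.form) := by
      rw [LinearMap.mem_ker, map_sub, map_smul, hz₁R]
      simp
    have h2 := hkerle h1
    rw [LinearMap.mem_ker, map_sub, map_smul, hcR] at h2
    simp only [smul_eq_mul] at h2
    linarith
  have hint : ∀ z : Fin n → ℤ, G.form z = F.form z * c := by
    intro z
    have := hprop (toR z)
    rw [← formR_eq_fL, ← formR_eq_fL, formR_toR, formR_toR] at this
    exact_mod_cast this
  -- c = ± 1
  obtain ⟨z₂, hz₂⟩ := G.surj 1
  have hc1 : c = 1 ∨ c = -1 := by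
    have h1 := hint z₂
    rw [hz₂] at h1
    exact Int.isUnit_iff.mp (IsUnit.of_mul_eq_one (a := c) (F.form z₂) (by linarith))
  obtain ⟨zF, hzF, hzFf⟩ := exists_lattice_on_facet (P := P) F
  have hzFG : G.form zF = G.b := h zF hzF hzFf
  rcases hc1 with hc1 | hc1
  · constructor
    · refine AddMonoidHom.ext fun z => ?_
      have := hint z
      rw [hc1, mul_one] at this
      exact this.symm
    · have := hint zF
      rw [hc1, mul_one, hzFG, hzFf] at this
      omega
  · exfalso
    have hbb : G.b = -F.b := by
      have := hint zF
      rw [hc1, hzFG, hzFf] at this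
      omega
    obtain ⟨z₃, hz₃, hz₃h⟩ := exists_pos_height hfd G
    have h1 := hint z₃
    rw [hc1] at h1
    have h2 := b_le_form F hz₃
    omega

/-- Dichotomy: a facet is either nonnegative on a column vector, or it is its
base facet. -/
lemma facet_dichotomy (hfd : P.IsFullDim) (F : P.Facet) {w : Fin n → ℤ}
    {G : P.Facet} (hw : P.IsBaseFacet w G) :
    0 ≤ F.form w ∨ (F.form = G.form ∧ F.b = G.b) := by
  by_cases hex : ∃ z ∈ P.latticePoints, F.form z = F.b ∧ G.form z ≠ G.b
  · left
    obtain ⟨z, hz, hzF, hzG⟩ := hex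
    have hzw : z + w ∈ P.latticePoints := col_step hw hz hzG
    have h1 := b_le_form F hzw
    rw [map_add] at h1
    omega
  · right
    push_neg at hex
    exact form_eq_of_zero_sub hfd F G fun z hz hzF => hex z hz hzF

/-- Uniqueness of the base facet (at the level of forms). -/
lemma base_facet_unique (hfd : P.IsFullDim) {v : Fin n → ℤ} {F G : P.Facet}
    (hF : P.IsBaseFacet v F) (hG : P.IsBaseFacet v G) :
    F.form = G.form ∧ F.b = G.b := by
  rcases facet_dichotomy hfd F hG with h | h
  · exact absurd h (by have := form_neg hfd hF; omega)
  · exact h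

end ColHelpers

open ColHelpers

/-- Basic properties (a),(b),(c) of products of column vectors. -/
theorem statement1 {n : ℕ} (P : LatticePolytope n) (hfd : P.IsFullDim)
    (hgen : P.AffGen) (u v : Fin n → ℤ) (Fu Fv : P.Facet)
    (hu : P.IsBaseFacet u Fu) (hv : P.IsBaseFacet v Fv) :
    (P.ProdEx u v ↔ u + v ≠ 0 ∧ 0 < Fv.form u) ∧
    (P.ProdEx u v ↔ P.IsColVec (u + v) ∧ P.IsBaseFacet (u + v) Fu) ∧
    (P.ProdEx u v → P.IsBaseFacet (u + v) Fu ∧ Fu.form v = 0) := by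
  have hL6u : Fu.form u = -1 := form_eq_neg_one hfd hgen hu
  have hL6v : Fv.form v = -1 := form_eq_neg_one hfd hgen hv
  have ha : P.ProdEx u v ↔ u + v ≠ 0 ∧ 0 < Fv.form u := by
    constructor
    · intro hp
      refine ⟨hp.2.2.1, ?_⟩
      by_cases hex : ∃ z ∈ P.latticePoints, Fv.form z = Fv.b ∧ Fu.form z ≠ Fu.b
      · obtain ⟨z, hzL, hz0, hzne⟩ := hex
        have hzu : z + u ∈ P.latticePoints := col_step hu hzL hzne
        have hnot := hp.2.2.2 Fu Fv hu hv z hzL (not_mem_facet hzL hzne)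
        have h1 : Fv.form (z + u) ≠ Fv.b := fun he =>
          hnot ((mem_facet_iff Fv _).mpr ⟨hzu, he⟩)
        have h2 := b_le_form Fv hzu
        rw [map_add] at h1 h2
        omega
      · push_neg at hex
        have heq := form_eq_of_zero_sub hfd Fv Fu hex
        exfalso
        obtain ⟨z, hzL, hz1⟩ := exists_height_one hfd hgen hu
        have hzne : Fu.form z ≠ Fu.b := by omega
        have hzu : z + u ∈ P.latticePoints := col_step hu hzL hzne
        have hnot := hp.2.2.2 Fu Fv hu hv z hzL (not_mem_facet hzL hzne)
        apply hnot
        rw [mem_facet_iff]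
        refine ⟨hzu, ?_⟩
        rw [heq.1, heq.2, map_add]
        omega
    · rintro ⟨hne, hpos⟩
      refine ⟨⟨Fu, hu⟩, ⟨Fv, hv⟩, hne, ?_⟩
      intro Fu' Fv' hu' hv' x hx hnx
      have hxL : x ∈ P.latticePoints := hx
      have hxne : Fu'.form x ≠ Fu'.b := fun he =>
        hnx ((mem_facet_iff Fu' x).mpr ⟨hxL, he⟩)
      have hxuL : x + u ∈ P.latticePoints := col_step hu' hxL hxne
      obtain ⟨hform, hb⟩ := base_facet_unique hfd hv' hv
      apply not_mem_facet hxuL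
      rw [hform, hb, map_add]
      have h1 := b_le_form Fv hxL
      omega
  have hc : P.ProdEx u v → P.IsBaseFacet (u + v) Fu ∧ Fu.form v = 0 := by
    intro hp
    have hBF : P.IsBaseFacet (u + v) Fu := by
      refine ⟨hp.2.2.1, fun x hx hnx => ?_⟩
      have hxu := hu.2 x hx hnx
      have hnotv := hp.2.2.2 Fu Fv hu hv x hx hnx
      have := hv.2 (x + u) hxu hnotv
      rwa [add_assoc] at this
    have h1 : Fu.form (u + v) = -1 := form_eq_neg_one hfd hgen hBF
    rw [map_add] at h1
    exact ⟨hBF, by omega⟩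
  refine ⟨ha, ⟨?_, ?_⟩, hc⟩
  · intro hp
    exact ⟨⟨Fu, (hc hp).1⟩, (hc hp).1⟩
  · rintro ⟨hcv, hBF⟩
    apply ha.mpr
    refine ⟨hBF.1, ?_⟩
    have h1 : Fu.form (u + v) = -1 := form_eq_neg_one hfd hgen hBF
    rcases facet_dichotomy hfd Fv hBF with hge | heq
    · rw [map_add] at hge
      omega
    · exfalso
      rw [map_add] at h1
      have h2 : Fv.form v = Fu.form v := by rw [heq.1]
      omega
end
end

section
/- Let P be a full-dimensional lattice polytope whose lattice points affinely generate ℤ^n, and let u, v, w ∈ Col(P). Then: (d) u + v ∈ Col(P) if and only if exactly one of the products uv and vu exists; (e) if uv and vw both exist and u + v + w ≠ 0, then the products (uv)w and u(vw) exist and (uv)w = u(vw) = u + v + w; (f) if vw and u(vw) exist and u + v ≠ 0, then uv exists. -/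
open Set

noncomputable section

section Aux
open LatticePolytope
variable {n : ℕ} {P : LatticePolytope n}

lemma toR_add (x y : Fin n → ℤ) : toR (x + y) = toR x + toR y := by
  funext i; simp [toR]

lemma formR_toR (φ : (Fin n → ℤ) →+ ℤ) (x : Fin n → ℤ) :
    formR φ (toR x) = ((φ x : ℤ) : ℝ) := by
  have h1 : φ x = ∑ i, x i * φ (Pi.single i 1) := by
    conv_lhs => rw [← Finset.univ_sum_single x]
    rw [map_sum]
    refine Finset.sum_congr rfl fun i _ => ?_
    have h2 : Pi.single i (x i) = ((x i • Pi.single i (1 : ℤ) : Fin n → ℤ)) := by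
      funext j
      by_cases h : j = i <;> simp [Pi.single_apply, h]
    rw [h2, map_zsmul, zsmul_eq_mul]
    simp
  rw [h1]
  simp only [formR, toR]
  push_cast
  rfl

/-- The height of a lattice vector over a facet. -/
def hgt (F : P.Facet) (x : Fin n → ℤ) : ℤ := F.form x - F.b

lemma hgt_nonneg (F : P.Facet) {x : Fin n → ℤ} (hx : toR x ∈ P.carrier) :
    0 ≤ hgt F x := by
  have h := F.min_le _ hx
  rw [formR_toR] at h
  have h2 : F.b ≤ F.form x := by exact_mod_cast h
  simp only [hgt]; omega

lemma mem_set_iff (F : P.Facet) {x : Fin n → ℤ} (hx : toR x ∈ P.carrier) :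
    toR x ∈ F.set ↔ hgt F x = 0 := by
  constructor
  · rintro ⟨-, h⟩
    rw [formR_toR] at h
    have : F.form x = F.b := by exact_mod_cast h
    simp only [hgt]; omega
  · intro h
    refine ⟨hx, ?_⟩
    rw [formR_toR]
    have : F.form x = F.b := by simp only [hgt] at h; omega
    exact_mod_cast this

lemma move {F : P.Facet} {v x : Fin n → ℤ} (hv : P.IsBaseFacet v F)
    (hx : toR x ∈ P.carrier) (h : 0 < hgt F x) : toR (x + v) ∈ P.carrier :=
  hv.2 x hx (fun hm => by rw [mem_set_iff F hx] at hm; omega)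

lemma hgt_add (F : P.Facet) (x y : Fin n → ℤ) :
    hgt F (x + y) = hgt F x + F.form y := by
  simp only [hgt, map_add]; ring

lemma verts_mem {x : Fin n → ℤ} (hx : x ∈ P.verts) : toR x ∈ P.carrier :=
  subset_convexHull ℝ _ (by simpa using Finset.mem_image_of_mem toR hx)

lemma exists_lattice (P : LatticePolytope n) : ∃ x : Fin n → ℤ, toR x ∈ P.carrier :=
  ⟨P.nonem.choose, verts_mem P.nonem.choose_spec⟩

lemma no_ray {x w : Fin n → ℤ} (hw : w ≠ 0)
    (h : ∀ k : ℕ, toR (x + k • w) ∈ P.carrier) : False := by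
  obtain ⟨C, hC⟩ := (isBounded_iff_forall_norm_le (E := Fin n → ℝ)).mp
    (((P.verts.finite_toSet.image toR).isCompact_convexHull (𝕜 := ℝ)).isBounded)
  obtain ⟨i, hi⟩ : ∃ i, w i ≠ 0 := by
    by_contra hh
    push_neg at hh
    exact hw (funext hh)
  obtain ⟨k, hk⟩ := exists_nat_gt (C + |(x i : ℝ)|)
  have hmem : ‖toR (x + k • w)‖ ≤ C := by
    refine hC _ ?_
    have hh := h k
    rwa [LatticePolytope.carrier, Finset.coe_image] at hh
  have hcoord : |((x + k • w) i : ℝ)| ≤ C := by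
    calc |((x + k • w) i : ℝ)| = ‖toR (x + k • w) i‖ := rfl
    _ ≤ ‖toR (x + k • w)‖ := norm_le_pi_norm _ i
    _ ≤ C := hmem
  have h1 : (1 : ℝ) ≤ |(w i : ℝ)| := by
    have : (1 : ℤ) ≤ |w i| := Int.one_le_abs hi
    exact_mod_cast this
  have h2 : ((x + k • w) i : ℝ) = (x i : ℝ) + (k : ℝ) * (w i : ℝ) := by
    have h0 : (x + k • w) i = x i + (k : ℤ) * w i := by simp [mul_comm]
    rw [h0]
    push_cast
    ring
  have h3 := abs_sub_abs_le_abs_sub ((k : ℝ) * (w i : ℝ)) (-(x i : ℝ))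
  rw [abs_neg, sub_neg_eq_add, abs_mul, Nat.abs_cast] at h3
  have h4 : |(x i : ℝ) + (k : ℝ) * (w i : ℝ)| ≤ C := by rw [← h2]; exact hcoord
  have h5 : |(k : ℝ) * (w i : ℝ) + (x i : ℝ)| = |(x i : ℝ) + (k : ℝ) * (w i : ℝ)| := by
    rw [add_comm]
  nlinarith [abs_nonneg ((x i : ℝ)),
    mul_le_mul_of_nonneg_left h1 (by positivity : (0:ℝ) ≤ (k : ℝ))]

end Aux
section Aux2
open LatticePolytope
variable {n : ℕ} {P : LatticePolytope n}

lemma formR_comb (φ : (Fin n → ℤ) →+ ℤ) (a b : ℝ) (y z : Fin n → ℝ) :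
    formR φ (a • y + b • z) = a * formR φ y + b * formR φ z := by
  simp only [formR, Pi.add_apply, Pi.smul_apply, smul_eq_mul, add_mul,
    Finset.sum_add_distrib, Finset.mul_sum, mul_assoc]

lemma exists_hgt_zero (F : P.Facet) :
    ∃ x : Fin n → ℤ, toR x ∈ P.carrier ∧ hgt F x = 0 := by
  obtain ⟨x₀, hx₀, hmin⟩ := P.verts.exists_min_image F.form P.nonem
  refine ⟨x₀, verts_mem hx₀, ?_⟩
  have hsub : P.carrier ⊆ {y | ((F.form x₀ : ℤ) : ℝ) ≤ formR F.form y} := by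
    apply convexHull_min
    · rintro y hy
      simp only [Finset.coe_image, Set.mem_image, Finset.mem_coe] at hy
      obtain ⟨z, hz, rfl⟩ := hy
      rw [Set.mem_setOf_eq, formR_toR]
      exact_mod_cast hmin z hz
    · intro p hp q hq a b ha hb hab
      rw [Set.mem_setOf_eq, formR_comb]
      simp only [Set.mem_setOf_eq] at hp hq
      calc ((F.form x₀ : ℤ) : ℝ) = a * ((F.form x₀ : ℤ) : ℝ) + b * ((F.form x₀ : ℤ) : ℝ) := by
            rw [← add_mul, hab, one_mul]
        _ ≤ a * formR F.form p + b * formR F.form q :=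
            add_le_add (mul_le_mul_of_nonneg_left hp ha) (mul_le_mul_of_nonneg_left hq hb)
  obtain ⟨p, hp, hpb⟩ := F.attained
  have h1 : ((F.form x₀ : ℤ) : ℝ) ≤ (F.b : ℝ) := hpb ▸ hsub hp
  have h2 := F.min_le _ (verts_mem hx₀)
  rw [formR_toR] at h2
  have h1' : F.form x₀ ≤ F.b := by exact_mod_cast h1
  have h2' : F.b ≤ F.form x₀ := by exact_mod_cast h2
  simp only [hgt]; omega

lemma unit_of_dvd_hgt (hgen : P.AffGen) (F : P.Facet) {d : ℤ}
    (hd : ∀ x : Fin n → ℤ, toR x ∈ P.carrier → d ∣ hgt F x) : IsUnit d := by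
  obtain ⟨x₀, hx₀, hz0⟩ := exists_hgt_zero F
  have hcl := hgen x₀ hx₀
  have hK : AddSubgroup.closure {y | ∃ x ∈ P.latticePoints, y = x - x₀} ≤
      AddSubgroup.comap F.form (AddSubgroup.zmultiples d) := by
    rw [AddSubgroup.closure_le]
    rintro y ⟨x, hx, rfl⟩
    simp only [SetLike.mem_coe, AddSubgroup.mem_comap, Int.mem_zmultiples_iff]
    have hfx : F.form (x - x₀) = hgt F x := by
      rw [map_sub]; simp only [hgt] at hz0 ⊢; omega
    rw [hfx]
    exact hd x hx
  rw [hcl] at hK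
  obtain ⟨z, hz1⟩ := F.surj 1
  have hmem := hK (AddSubgroup.mem_top z)
  rw [AddSubgroup.mem_comap, Int.mem_zmultiples_iff, hz1] at hmem
  exact isUnit_of_dvd_one hmem

lemma exists_hgt_pos (hgen : P.AffGen) (F : P.Facet) :
    ∃ x : Fin n → ℤ, toR x ∈ P.carrier ∧ 0 < hgt F x := by
  by_contra h
  push_neg at h
  have hz : ∀ x : Fin n → ℤ, toR x ∈ P.carrier → hgt F x = 0 := fun x hx =>
    le_antisymm (h x hx) (hgt_nonneg F hx)
  have := unit_of_dvd_hgt hgen F (d := 0) (fun x hx => by rw [hz x hx])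
  simp [Int.isUnit_iff] at this

lemma base_form_eq_neg_one (hgen : P.AffGen) {v : Fin n → ℤ} {F : P.Facet}
    (hv : P.IsBaseFacet v F) : F.form v = -1 := by
  have hneg : F.form v ≤ -1 := by
    by_contra hc
    push_neg at hc
    have hc' : 0 ≤ F.form v := by omega
    obtain ⟨x, hx, hpos⟩ := exists_hgt_pos hgen F
    have key : ∀ k : ℕ, toR (x + k • v) ∈ P.carrier ∧ 0 < hgt F (x + k • v) := by
      intro k
      induction k with
      | zero => simpa using ⟨hx, hpos⟩
      | succ k ih =>
        have hmove := move hv ih.1 ih.2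
        have heq : x + (k+1) • v = (x + k • v) + v := by
          rw [succ_nsmul, ← add_assoc]
        rw [heq]
        refine ⟨hmove, ?_⟩
        rw [hgt_add]
        omega
    exact no_ray hv.1 (fun k => (key k).1)
  set d := -F.form v with hd
  have hdvd : ∀ N : ℕ, ∀ x : Fin n → ℤ, toR x ∈ P.carrier →
      (hgt F x).toNat ≤ N → d ∣ hgt F x := by
    intro N
    induction N with
    | zero =>
      intro x hx hle
      have h0 := hgt_nonneg F hx
      have : hgt F x = 0 := by omega
      simp [this]
    | succ N ih =>
      intro x hx hle
      rcases eq_or_lt_of_le (hgt_nonneg F hx) with h0 | h0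
      · simp [show hgt F x = 0 by omega]
      · have hmove := move hv hx h0
        have h1 : hgt F (x + v) = hgt F x - d := by rw [hgt_add]; omega
        have h2 := ih (x + v) hmove (by have := hgt_nonneg F hmove; omega)
        have h3 : hgt F x = hgt F (x + v) + d := by omega
        rw [h3]
        exact dvd_add h2 (dvd_refl d)
  have hunit := unit_of_dvd_hgt hgen F (fun x hx => hdvd (hgt F x).toNat x hx le_rfl)
  rw [Int.isUnit_iff] at hunit
  omega

lemma exists_hgt_eq (hgen : P.AffGen) {v : Fin n → ℤ} {F : P.Facet}
    (hv : P.IsBaseFacet v F) {e : ℤ} (he : 0 ≤ e)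
    (hex : ∃ x : Fin n → ℤ, toR x ∈ P.carrier ∧ e ≤ hgt F x) :
    ∃ y : Fin n → ℤ, toR y ∈ P.carrier ∧ hgt F y = e := by
  have hm1 := base_form_eq_neg_one hgen hv
  obtain ⟨x, hx, hxe⟩ := hex
  have key : ∀ N : ℕ, ∀ x : Fin n → ℤ, toR x ∈ P.carrier → e ≤ hgt F x →
      (hgt F x - e).toNat ≤ N → ∃ y : Fin n → ℤ, toR y ∈ P.carrier ∧ hgt F y = e := by
    intro N
    induction N with
    | zero =>
      intro x hx hxe hle
      exact ⟨x, hx, by omega⟩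
    | succ N ih =>
      intro x hx hxe hle
      rcases eq_or_lt_of_le hxe with h0 | h0
      · exact ⟨x, hx, h0.symm⟩
      · have hmove := move hv hx (by omega)
        have h1 : hgt F (x + v) = hgt F x - 1 := by rw [hgt_add]; omega
        exact ih (x + v) hmove (by omega) (by omega)
  exact key (hgt F x - e).toNat x hx hxe le_rfl

end Aux2
section Aux3
open LatticePolytope
variable {n : ℕ} {P : LatticePolytope n}

lemma engine (hgen : P.AffGen) {z : Fin n → ℤ} {G : P.Facet}
    (hz : P.IsBaseFacet z G) (F : P.Facet)
    (H0 : ∀ x : Fin n → ℤ, toR x ∈ P.carrier → hgt G x = 0 → hgt F x = 0) :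
    F.form = G.form ∧ F.b = G.b := by
  have hGz := base_form_eq_neg_one hgen hz
  set t := -(F.form z) with ht
  have prop : ∀ N : ℕ, ∀ x : Fin n → ℤ, toR x ∈ P.carrier →
      (hgt G x).toNat ≤ N → hgt F x = t * hgt G x := by
    intro N
    induction N with
    | zero =>
      intro x hx hle
      have h0 := hgt_nonneg G hx
      have h0' : hgt G x = 0 := by omega
      rw [h0', H0 x hx h0']
      ring
    | succ N ih =>
      intro x hx hle
      rcases eq_or_lt_of_le (hgt_nonneg G hx) with h0 | h0
      · rw [← h0, H0 x hx h0.symm]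
        ring
      · have hmove := move hz hx h0
        have h1 : hgt G (x + z) = hgt G x - 1 := by rw [hgt_add]; omega
        have h2 := ih (x + z) hmove (by omega)
        have h3 : hgt F (x + z) = hgt F x - t := by rw [hgt_add]; omega
        rw [h1] at h2
        calc hgt F x = hgt F (x + z) + t := by omega
          _ = t * (hgt G x - 1) + t := by rw [h2]
          _ = t * hgt G x := by ring
  have prop' : ∀ x : Fin n → ℤ, toR x ∈ P.carrier → hgt F x = t * hgt G x :=
    fun x hx => prop _ x hx le_rfl
  obtain ⟨y, hy, hypos⟩ := exists_hgt_pos hgen F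
  have h1t : 1 ≤ t := by
    have hp := prop' y hy
    have hG0 := hgt_nonneg G hy
    nlinarith
  obtain ⟨x₀, hx₀⟩ := exists_lattice P
  let K : AddSubgroup (Fin n → ℤ) :=
    { carrier := {w | F.form w = t * G.form w}
      zero_mem' := by simp
      add_mem' := by
        intro a b ha hb
        simp only [Set.mem_setOf_eq, map_add] at *
        rw [ha, hb]; ring
      neg_mem' := by
        intro a ha
        simp only [Set.mem_setOf_eq, map_neg] at *
        rw [ha]; ring }
  have hKle : AddSubgroup.closure {y | ∃ x ∈ P.latticePoints, y = x - x₀} ≤ K := by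
    rw [AddSubgroup.closure_le]
    rintro y ⟨x, hx, rfl⟩
    have p1 := prop' x hx
    have p0 := prop' x₀ hx₀
    show F.form (x - x₀) = t * G.form (x - x₀)
    rw [map_sub, map_sub]
    simp only [hgt] at p1 p0
    linear_combination p1 - p0
  rw [hgen x₀ hx₀] at hKle
  have hall : ∀ w, F.form w = t * G.form w := fun w => hKle (AddSubgroup.mem_top w)
  obtain ⟨w₁, hw₁⟩ := F.surj 1
  have hone : (1 : ℤ) = t * G.form w₁ := by rw [← hw₁, hall]
  have hdvd : t ∣ 1 := ⟨G.form w₁, hone⟩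
  have ht1 : t = 1 := by
    have := Int.isUnit_iff.mp (isUnit_of_dvd_one hdvd)
    omega
  have hform : F.form = G.form := by
    refine DFunLike.ext _ _ fun w => ?_
    rw [hall w, ht1, one_mul]
  refine ⟨hform, ?_⟩
  obtain ⟨x₁, hx₁, hz1⟩ := exists_hgt_zero G
  have hF1 : hgt F x₁ = 0 := H0 _ hx₁ hz1
  have hfe : F.form x₁ = G.form x₁ := by rw [hform]
  simp only [hgt] at hF1 hz1
  omega

/-- Uniqueness of the base facet: two base facets of `v` have the same data. -/
lemma base_unique (hgen : P.AffGen) {v : Fin n → ℤ} {F G : P.Facet}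
    (hF : P.IsBaseFacet v F) (hG : P.IsBaseFacet v G) :
    F.form = G.form ∧ F.b = G.b := by
  have hGm1 := base_form_eq_neg_one hgen hG
  refine engine hgen hG F (fun x hx h0 => ?_)
  by_contra hne
  have hpos : 0 < hgt F x := lt_of_le_of_ne (hgt_nonneg F hx) (Ne.symm hne)
  have hmove := move hF hx hpos
  have := hgt_nonneg G hmove
  rw [hgt_add] at this
  omega

/-- If `⟨G, u⟩ ≤ -1` for `G` a base facet of some column vector and `u` a column
vector with base facet `Fu`, then `G` and `Fu` coincide. -/
lemma neg_form_eq (hgen : P.AffGen) {z u : Fin n → ℤ} {G Fu : P.Facet}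
    (hz : P.IsBaseFacet z G) (hu : P.IsBaseFacet u Fu) (h : G.form u ≤ -1) :
    Fu.form = G.form ∧ Fu.b = G.b := by
  refine engine hgen hz Fu (fun x hx h0 => ?_)
  by_contra hne
  have hpos : 0 < hgt Fu x := lt_of_le_of_ne (hgt_nonneg Fu hx) (Ne.symm hne)
  have hmove := move hu hx hpos
  have := hgt_nonneg G hmove
  rw [hgt_add] at this
  omega

end Aux3
section Aux4
open LatticePolytope
variable {n : ℕ} {P : LatticePolytope n}

lemma not_mem_set_of_hgt_pos (F : P.Facet) {x : Fin n → ℤ}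
    (hx : toR x ∈ P.carrier) (h : 0 < hgt F x) : toR x ∉ F.set :=
  fun hm => by rw [mem_set_iff F hx] at hm; omega

/-- If the product `uv` exists then `u + v` is a column vector with the same base
facet as `u`. -/
lemma prodEx_base (hp : P.ProdEx u v) {Fu : P.Facet} (hu : P.IsBaseFacet u Fu) :
    P.IsBaseFacet (u + v) Fu := by
  obtain ⟨Fv, hv⟩ := hp.2.1
  refine ⟨hp.2.2.1, fun x hx hxF => ?_⟩
  have hxu : toR (x + u) ∈ P.carrier := hu.2 x hx hxF
  have hxuv : toR ((x + u) + v) ∈ P.carrier :=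
    hv.2 (x + u) hxu (hp.2.2.2 Fu Fv hu hv x hx hxF)
  rwa [show x + (u + v) = (x + u) + v by ring]

/-- No infinite ladder: two column vectors cannot both have positive pairing with
the other's base facet. -/
lemma no_double (hgen : P.AffGen) {u v : Fin n → ℤ} {Fu Fv : P.Facet}
    (hu : P.IsBaseFacet u Fu) (hv : P.IsBaseFacet v Fv)
    (h1 : 1 ≤ Fv.form u) (h2 : 1 ≤ Fu.form v) (hne : u + v ≠ 0) : False := by
  have hum1 := base_form_eq_neg_one hgen hu
  obtain ⟨x, hx, hpos⟩ := exists_hgt_pos hgen Fu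
  have key : ∀ k : ℕ, toR (x + k • (u + v)) ∈ P.carrier ∧
      0 < hgt Fu (x + k • (u + v)) := by
    intro k
    induction k with
    | zero => simpa using ⟨hx, hpos⟩
    | succ k ih =>
      set y := x + k • (u + v) with hy
      have hyu : toR (y + u) ∈ P.carrier := move hu ih.1 ih.2
      have hyuFv : 0 < hgt Fv (y + u) := by
        have := hgt_nonneg Fv ih.1
        rw [hgt_add]
        omega
      have hyuv : toR ((y + u) + v) ∈ P.carrier := move hv hyu hyuFv
      have heq : x + (k + 1) • (u + v) = (y + u) + v := by
        rw [succ_nsmul, hy]; ring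
      rw [heq]
      refine ⟨hyuv, ?_⟩
      rw [hgt_add, hgt_add]
      omega
  exact no_ray hne (fun k => (key k).1)

/-- The numerical criterion for existence of the product `uv`. -/
lemma prodEx_iff (hgen : P.AffGen) {u v : Fin n → ℤ} {Fu Fv : P.Facet}
    (hu : P.IsBaseFacet u Fu) (hv : P.IsBaseFacet v Fv) :
    P.ProdEx u v ↔ (u + v ≠ 0 ∧ 1 ≤ Fv.form u) := by
  constructor
  · rintro ⟨-, -, hne, hmain⟩
    refine ⟨hne, ?_⟩
    by_contra hc
    push_neg at hc
    rcases lt_or_ge (Fv.form u) 0 with hneg | hzero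
    · -- Fv.form u ≤ -1 : then Fu and Fv coincide
      obtain ⟨hfe, hbe⟩ := neg_form_eq hgen hv hu (by omega)
      have hm1 : Fv.form u = -1 := by rw [← hfe]; exact base_form_eq_neg_one hgen hu
      obtain ⟨x, hx, hx1⟩ := exists_hgt_eq hgen hv (e := 1) (by omega)
        (by obtain ⟨y, hy, hyp⟩ := exists_hgt_pos hgen Fv; exact ⟨y, hy, by omega⟩)
      have hxFu : 0 < hgt Fu x := by simp only [hgt, hfe, hbe] at *; omega
      have hnot := hmain Fu Fv hu hv x hx (not_mem_set_of_hgt_pos Fu hx hxFu)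
      have hxu : toR (x + u) ∈ P.carrier := move hu hx hxFu
      exact hnot ((mem_set_iff Fv hxu).mpr (by rw [hgt_add]; omega))
    · -- Fv.form u = 0
      have h0 : Fv.form u = 0 := by omega
      have H0 : ∀ x : Fin n → ℤ, toR x ∈ P.carrier → hgt Fv x = 0 → hgt Fu x = 0 := by
        intro x hx hvz
        by_contra hne'
        have hpos : 0 < hgt Fu x := lt_of_le_of_ne (hgt_nonneg Fu hx) (Ne.symm hne')
        have hnot := hmain Fu Fv hu hv x hx (not_mem_set_of_hgt_pos Fu hx hpos)
        have hxu : toR (x + u) ∈ P.carrier := move hu hx hpos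
        exact hnot ((mem_set_iff Fv hxu).mpr (by rw [hgt_add]; omega))
      obtain ⟨hfe, -⟩ := engine hgen hv Fu H0
      have := base_form_eq_neg_one hgen hu
      rw [hfe] at this
      omega
  · rintro ⟨hne, hge⟩
    refine ⟨⟨Fu, hu⟩, ⟨Fv, hv⟩, hne, fun Fu' Fv' hu' hv' x hx hxF hmem => ?_⟩
    obtain ⟨hfe, hbe⟩ := base_unique hgen hv' hv
    have hxu : toR (x + u) ∈ P.carrier := hu'.2 x hx hxF
    rw [mem_set_iff Fv' hxu, hgt_add] at hmem
    have hxnn := hgt_nonneg Fv' hx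
    have : Fv'.form u = Fv.form u := by rw [hfe]
    omega

end Aux4
/-- Basic properties (d),(e),(f) of products of column vectors. -/
theorem statement2 {n : ℕ} (P : LatticePolytope n) (hfd : P.IsFullDim)
    (hgen : P.AffGen) (u v w : Fin n → ℤ)
    (hu : P.IsColVec u) (hv : P.IsColVec v) (hw : P.IsColVec w) :
    (P.IsColVec (u + v) ↔
      ((P.ProdEx u v ∧ ¬ P.ProdEx v u) ∨ (¬ P.ProdEx u v ∧ P.ProdEx v u))) ∧
    (P.ProdEx u v → P.ProdEx v w → u + v + w ≠ 0 →
      P.ProdEx (u + v) w ∧ P.ProdEx u (v + w) ∧ (u + v) + w = u + (v + w)) ∧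
    (P.ProdEx v w → P.ProdEx u (v + w) → u + v ≠ 0 → P.ProdEx u v) := by
  obtain ⟨Fu, hFu⟩ := hu
  obtain ⟨Fv, hFv⟩ := hv
  obtain ⟨Fw, hFw⟩ := hw
  refine ⟨?_, ?_, ?_⟩
  · -- (d)
    constructor
    · rintro ⟨G, hG⟩
      by_cases hp : P.ProdEx u v
      · left
        refine ⟨hp, fun hq => ?_⟩
        have h1 := ((prodEx_iff hgen hFu hFv).mp hp).2
        have h2 := ((prodEx_iff hgen hFv hFu).mp hq).2
        exact no_double hgen hFu hFv h1 h2 hp.2.2.1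
      · right
        refine ⟨hp, ?_⟩
        rw [prodEx_iff hgen hFv hFu]
        have hne : u + v ≠ 0 := hG.1
        refine ⟨by rwa [add_comm], ?_⟩
        by_contra hc
        push_neg at hc
        have hc1 : Fu.form v ≤ 0 := by omega
        have hcv : Fv.form u ≤ 0 := by
          by_contra hc2
          push_neg at hc2
          exact hp ((prodEx_iff hgen hFu hFv).mpr ⟨hne, by omega⟩)
        have hGm1 := base_form_eq_neg_one hgen hG
        have hGsum : G.form u + G.form v = -1 := by rw [← map_add]; exact hGm1
        have hum1 := base_form_eq_neg_one hgen hFu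
        have hvm1 := base_form_eq_neg_one hgen hFv
        rcases le_or_gt (G.form u) (-1) with hcase | hcase
        · obtain ⟨hfe1, hbe1⟩ := neg_form_eq hgen hG hFu hcase
          have hGu : G.form u = -1 := by rw [← hfe1]; exact hum1
          have hGv : G.form v = 0 := by omega
          have hFvuv : Fv.form (u + v) ≤ -1 := by rw [map_add]; omega
          obtain ⟨hfe2, hbe2⟩ := neg_form_eq hgen hFv hG hFvuv
          have hx : G.form v = Fv.form v := by rw [hfe2]
          omega
        · have hcase' : G.form v ≤ -1 := by omega
          obtain ⟨hfe1, hbe1⟩ := neg_form_eq hgen hG hFv hcase'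
          have hGv : G.form v = -1 := by rw [← hfe1]; exact hvm1
          have hGu : G.form u = 0 := by omega
          have hFuuv : Fu.form (u + v) ≤ -1 := by rw [map_add]; omega
          obtain ⟨hfe2, hbe2⟩ := neg_form_eq hgen hFu hG hFuuv
          have hx : G.form u = Fu.form u := by rw [hfe2]
          omega
    · rintro (⟨hp, -⟩ | ⟨-, hq⟩)
      · exact ⟨Fu, prodEx_base hp hFu⟩
      · have h := prodEx_base hq hFv
        rw [add_comm v u] at h
        exact ⟨Fv, h⟩
  · -- (e)
    intro hp hq hs
    have huv : P.IsBaseFacet (u + v) Fu := prodEx_base hp hFu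
    have hvw : P.IsBaseFacet (v + w) Fv := prodEx_base hq hFv
    have h1 := ((prodEx_iff hgen hFu hFv).mp hp).2
    have h2 := ((prodEx_iff hgen hFv hFw).mp hq).2
    have hwu : 0 ≤ Fw.form u := by
      by_contra hc
      push_neg at hc
      obtain ⟨hfe, hbe⟩ := neg_form_eq hgen hFw hFu (by omega)
      have h2' : 1 ≤ Fu.form v := by rw [hfe]; exact h2
      exact no_double hgen hFu hFv h1 h2' hp.2.2.1
    refine ⟨?_, ?_, by rw [add_assoc]⟩
    · rw [prodEx_iff hgen huv hFw]
      refine ⟨hs, ?_⟩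
      rw [map_add]
      omega
    · rw [prodEx_iff hgen hFu hvw]
      exact ⟨by rwa [← add_assoc], h1⟩
  · -- (f)
    intro hq hr hne
    have hvw : P.IsBaseFacet (v + w) Fv := prodEx_base hq hFv
    have h1 := ((prodEx_iff hgen hFu hvw).mp hr).2
    exact (prodEx_iff hgen hFu hFv).mpr ⟨hne, h1⟩
end
end
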